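/- arXiv:math/0607727 — 5 statements merged into one kernel-verified Lean document; each statement's English description precedes it below -/
import Mathlib

section
/- Let A_1, ..., A_n be finite-dimensional subspaces of a finite-dimensional algebra H such that H equals the span of products A_1 A_2 ... A_n and dim H = (dim A_1)(dim A_2)...(dim A_n). Then for any 1 ≤ t ≤ t+l ≤ n, the multiplication map from A_t ⊗ A_{t+1} ⊗ ... ⊗ A_{t+l} onto the span A_t A_{t+1} ... A_{t+l} is bijective. -/
/-! The multiplication map `A_t ⊗ ⋯ ⊗ A_{t+l} → H` always has image `A_t ⋯ A_{t+l}`, and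
`dim (A B) ≤ dim A · dim B`. Writing `H = A_1 ⋯ A_n` as the product of the blocks before, inside
and after `t, …, t+l`, the hypothesis `dim H = ∏ dim A_i` squeezes these inequalities into an
equality for the middle block, so the image is as large as the tensor product and the map is
injective. -/

open TensorProduct Pointwise

theorem List.take_drop_ofFn {α : Type*} {n : ℕ} (v : Fin n → α) (t m : ℕ) (h : t + m ≤ n) :
    ((List.ofFn v).drop t).take m = List.ofFn fun i : Fin m => v ⟨t + i, by omega⟩ := by
  apply List.ext_getElem
  · simp; omega
  · intro i _ _
    simp

theorem Module.finrank_piTensorProduct {R ι : Type*} [CommRing R] [StrongRankCondition R]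
    [Fintype ι]
    {M : ι → Type*} [∀ i, AddCommGroup (M i)] [∀ i, Module R (M i)]
    [∀ i, Module.Free R (M i)] [∀ i, Module.Finite R (M i)] :
    Module.finrank R (⨂[R] i, M i) = ∏ i, Module.finrank R (M i) := by
  classical
  rw [Module.finrank_eq_card_basis (Basis.piTensorProduct fun i => Module.finBasis R (M i))]
  simp

-- Stated for an `AddCommMonoid` domain so that it applies to `⨂[k] i, W i` for submodules `W i`,
-- whose `AddCommGroup` structure is not syntactically the one the tensor product carries.
theorem LinearMap.injective_of_finrank_range_eq {K V V₂ : Type*} [DivisionRing K]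
    [AddCommMonoid V] [Module K V] [AddCommGroup V₂] [Module K V₂] [Module.Finite K V]
    (f : V →ₗ[K] V₂) (h : Module.finrank K (LinearMap.range f) = Module.finrank K V) :
    Function.Injective f := by
  let := Module.addCommMonoidToAddCommGroup K (M := V)
  rw [← LinearMap.injective_rangeRestrict_iff,
    LinearMap.injective_iff_surjective_of_finrank_eq_finrank h.symm]
  exact f.surjective_rangeRestrict

namespace Submodule

section Semiring
variable {R A : Type*} [CommSemiring R] [Semiring A] [Algebra R A]

theorem list_prod_ofFn_eq_span {m : ℕ} (U : Fin m → Submodule R A) :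
    (List.ofFn U).prod =
      span R (Set.range fun x : Π i, U i => (List.ofFn fun i => (x i : A)).prod) := by
  induction m with
  | zero => simp [one_eq_span, Set.range_const]
  | succ m ih =>
    have hrange : (Set.range fun x : Π i, U i => (List.ofFn fun i => (x i : A)).prod) =
        (U 0 : Set A) *
          Set.range fun x : Π i : Fin m, U i.succ => (List.ofFn fun i => (x i : A)).prod := by
      ext y
      constructor
      · rintro ⟨x, rfl⟩
        exact ⟨x 0, (x 0).2, _, ⟨Fin.tail x, rfl⟩, by simp [List.ofFn_succ, Fin.tail]⟩
      · rintro ⟨a, ha, _, ⟨x, rfl⟩, rfl⟩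
        exact ⟨Fin.cons ⟨a, ha⟩ x, by simp [List.ofFn_succ]⟩
    rw [List.ofFn_succ, List.prod_cons, ih, hrange, ← span_mul_span, span_eq]

variable (R) in
noncomputable def mulMapFin {m : ℕ} (U : Fin m → Submodule R A) : (⨂[R] i, U i) →ₗ[R] A :=
  PiTensorProduct.lift
    ((MultilinearMap.mkPiAlgebraFin R m A).compLinearMap fun i => (U i).subtype)

theorem mulMapFin_tprod {m : ℕ} (U : Fin m → Submodule R A) (x : Π i, U i) :
    mulMapFin R U (PiTensorProduct.tprod R x) = (List.ofFn fun i => (x i : A)).prod := by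
  simp [mulMapFin]

theorem mulMapFin_range {m : ℕ} (U : Fin m → Submodule R A) :
    LinearMap.range (mulMapFin R U) = (List.ofFn U).prod := by
  rw [LinearMap.range_eq_map, ← PiTensorProduct.span_tprod_eq_top, map_span, ← Set.range_comp,
    list_prod_ofFn_eq_span]
  simp only [Function.comp_def, mulMapFin_tprod]

end Semiring

section Field
variable {k H : Type*} [Field k] [Ring H] [Algebra k H]

theorem finrank_mul_le (A B : Submodule k H) [Module.Finite k A] [Module.Finite k B] :
    Module.finrank k ↥(A * B) ≤ Module.finrank k A * Module.finrank k B := by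
  rw [← mulMap_range, ← Module.finrank_tensorProduct]
  exact LinearMap.finrank_range_le _

variable [FiniteDimensional k H]

theorem finrank_list_prod_le (L : List (Submodule k H)) :
    Module.finrank k ↥L.prod ≤ (L.map fun S : Submodule k H => Module.finrank k S).prod := by
  induction L with
  | nil =>
    rw [List.prod_nil, List.map_nil, List.prod_nil, one_eq_span]
    simpa using finrank_span_le_card (R := k) ({1} : Set H)
  | cons S L ih =>
    rw [List.prod_cons, List.map_cons, List.prod_cons]
    exact (finrank_mul_le S L.prod).trans (Nat.mul_le_mul_left _ ih)

theorem finrank_list_prod_eq_of_append_prod_eq_top {L₁ L₂ L₃ : List (Submodule k H)}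
    (hne : L₂ ≠ []) (htop : (L₁ ++ L₂ ++ L₃).prod = ⊤)
    (hdim : Module.finrank k H =
      ((L₁ ++ L₂ ++ L₃).map fun S : Submodule k H => Module.finrank k S).prod) :
    Module.finrank k ↥L₂.prod = (L₂.map fun S : Submodule k H => Module.finrank k S).prod := by
  rcases subsingleton_or_nontrivial H with hH | hH
  · have hzero (S : Submodule k H) : Module.finrank k S = 0 :=
      Nat.eq_zero_of_le_zero ((finrank_le S).trans_eq Module.finrank_zero_of_subsingleton)
    obtain ⟨S, L, rfl⟩ := List.exists_cons_of_ne_nil hne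
    rw [hzero, List.map_cons, List.prod_cons, hzero, zero_mul]
  let P (L : List (Submodule k H)) : ℕ := Module.finrank k ↥L.prod
  let Q (L : List (Submodule k H)) : ℕ := (L.map fun S : Submodule k H => Module.finrank k S).prod
  have hQ : Module.finrank k H = Q L₁ * Q L₂ * Q L₃ := by
    simp only [hdim, Q, List.map_append, List.prod_append]
  have hsandwich : Q L₁ * Q L₂ * Q L₃ ≤ Q L₁ * P L₂ * Q L₃ := calc
    Q L₁ * Q L₂ * Q L₃ = Module.finrank k ↥(L₁.prod * L₂.prod * L₃.prod) := by
      rw [← hQ, ← List.prod_append, ← List.prod_append, htop, finrank_top]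
    _ ≤ P L₁ * P L₂ * P L₃ :=
      (finrank_mul_le _ _).trans (Nat.mul_le_mul_right _ (finrank_mul_le _ _))
    _ ≤ Q L₁ * P L₂ * Q L₃ := by
      gcongr <;> exact finrank_list_prod_le _
  have hpos : 0 < Q L₁ * Q L₃ := by
    have : 0 < Q L₁ * Q L₂ * Q L₃ := hQ ▸ Module.finrank_pos
    exact Nat.mul_pos (Nat.pos_of_mul_pos_right (Nat.pos_of_mul_pos_right this))
      (Nat.pos_of_mul_pos_left this)
  refine le_antisymm (finrank_list_prod_le L₂) (Nat.le_of_mul_le_mul_left ?_ hpos)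
  simpa only [mul_right_comm _ _ (Q L₃), mul_comm (Q L₂), mul_comm (P L₂)] using hsandwich

end Field
end Submodule

/-- Let `A_1, …, A_n` be finite-dimensional subspaces of a finite-dimensional algebra `H`
with `H = A_1 A_2 ⋯ A_n` (span of products) and
`dim H = (dim A_1)(dim A_2)⋯(dim A_n)`.  Then for any `1 ≤ t ≤ t + l ≤ n`, the
multiplication map `A_t ⊗ A_{t+1} ⊗ ⋯ ⊗ A_{t+l} → H` is injective with range the span
`A_t A_{t+1} ⋯ A_{t+l}`, i.e. it is bijective onto that span. -/
theorem mul_map_bijective_of_dim (k H : Type*) [Field k] [Ring H] [Algebra k H]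
    [FiniteDimensional k H] (n : ℕ) (V : Fin n → Submodule k H)
    (hspan : (List.ofFn V).prod = (⊤ : Submodule k H))
    (hdim : Module.finrank k H = ∏ i, Module.finrank k (V i))
    (t l : ℕ) (h : t + l + 1 ≤ n) :
    let W : Fin (l + 1) → Submodule k H := fun i => V ⟨t + i, by have := i.isLt; omega⟩
    let f : (⨂[k] (i : Fin (l + 1)), ↥(W i)) →ₗ[k] H :=
      PiTensorProduct.lift ((MultilinearMap.mkPiAlgebraFin k (l + 1) H).compLinearMap
        fun i => (W i).subtype)
    Function.Injective f ∧ LinearMap.range f = (List.ofFn W).prod := by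
  intro W f
  have hrange : LinearMap.range f = (List.ofFn W).prod := Submodule.mulMapFin_range W
  have hsplit : List.ofFn V =
      (List.ofFn V).take t ++ List.ofFn W ++ ((List.ofFn V).drop t).drop (l + 1) := by
    rw [← List.take_drop_ofFn V t (l + 1) h, List.append_assoc, List.take_append_drop,
      List.take_append_drop]
  have hmid := Submodule.finrank_list_prod_eq_of_append_prod_eq_top (L₂ := List.ofFn W)
    (by simp) (hsplit ▸ hspan) (by rw [← hsplit, hdim, List.map_ofFn, Fin.prod_ofFn]; rfl)
  have hfinrank : Module.finrank k ↥(LinearMap.range f) =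
      Module.finrank k (⨂[k] (i : Fin (l + 1)), ↥(W i)) := by
    rw [hrange, hmid, List.map_ofFn, Fin.prod_ofFn, Module.finrank_piTensorProduct]
    rfl
  exact ⟨LinearMap.injective_of_finrank_range_eq f hfinrank, hrange⟩
end

section
/- Let D = A ⊗ H carry the double cross product Hopf algebra structure of finite-dimensional Hopf algebras A and H. Then there exist u ∈ H and v ∈ A such that a nonzero left integral of D equals Λ_A^l ⊗ u and a nonzero right integral of D equals v ⊗ Λ_H^r, where Λ_A^l is a nonzero left integral of A and Λ_H^r a nonzero right integral of H. -/
set_option maxHeartbeats 1600000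
set_option linter.unusedSectionVars false
set_option linter.unusedVariables false
set_option linter.unusedTactic false

open TensorProduct

/-- `Λ` is a left integral in the Hopf algebra `H`: `x Λ = ε(x) Λ` for all `x`. -/
def IsLeftIntegral (k : Type*) {H : Type*} [CommRing k] [Ring H] [HopfAlgebra k H]
    (Λ : H) : Prop :=
  ∀ x : H, x * Λ = Coalgebra.counit (R := k) x • Λ

/-- `Λ` is a right integral in the Hopf algebra `H`: `Λ x = ε(x) Λ` for all `x`. -/
def IsRightIntegral (k : Type*) {H : Type*} [CommRing k] [Ring H] [HopfAlgebra k H]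
    (Λ : H) : Prop :=
  ∀ x : H, Λ * x = Coalgebra.counit (R := k) x • Λ

open Coalgebra

namespace LSAux

variable {k : Type*} [Field k]




section ConvOne
variable {L B : Type*} [AddCommGroup L] [Module k L] [Coalgebra k L]
  [Ring B] [Algebra k B]

/-- Convolution product on `Hom(L, B)`. -/
noncomputable def conv (f g : L →ₗ[k] B) : L →ₗ[k] B :=
  LinearMap.mul' k B ∘ₗ TensorProduct.map f g ∘ₗ Coalgebra.comul

/-- Unit for convolution. -/
noncomputable def cunit : L →ₗ[k] B := (Algebra.linearMap k B) ∘ₗ Coalgebra.counit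

lemma conv_repr (f g : L →ₗ[k] B) {a : L} {ι : Type*} (r : Coalgebra.Repr k a ι) :
    conv f g a = ∑ i ∈ r.index, f (r.left i) * g (r.right i) := by
  simp only [conv, LinearMap.comp_apply, ← r.eq, map_sum, TensorProduct.map_tmul,
    LinearMap.mul'_apply]

lemma cunit_apply (a : L) : (cunit (k := k) (L := L) (B := B)) a
    = counit (R := k) a • (1 : B) := by
  simp [cunit, Algebra.smul_def]

lemma sum_counit_smul {B' : Type*} [AddCommGroup B'] [Module k B']
    (f : L →ₗ[k] B') {a : L} {ι : Type*} (r : Coalgebra.Repr k a ι) :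
    ∑ i ∈ r.index, counit (R := k) (r.left i) • f (r.right i) = f a := by
  have h := congrArg (TensorProduct.lid k B') (sum_counit_tmul_map_eq (R := k) f a (repr := r))
  simp only [map_sum, TensorProduct.lid_tmul, LinearEquiv.coe_coe] at h
  simpa using h

lemma sum_smul_counit {B' : Type*} [AddCommGroup B'] [Module k B']
    (f : L →ₗ[k] B') {a : L} {ι : Type*} (r : Coalgebra.Repr k a ι) :
    ∑ i ∈ r.index, counit (R := k) (r.right i) • f (r.left i) = f a := by
  have h := congrArg (TensorProduct.rid k B') (sum_map_tmul_counit_eq (R := k) f a (repr := r))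
  simp only [map_sum, TensorProduct.rid_tmul, LinearEquiv.coe_coe] at h
  simpa using h

lemma conv_cunit_left (f : L →ₗ[k] B) : conv cunit f = f := by
  ext a
  have r := ℛ k a
  rw [conv_repr _ _ r]
  calc ∑ i ∈ r.index, cunit (r.left i) * f (r.right i)
      = ∑ i ∈ r.index, counit (R := k) (r.left i) • f (r.right i) := by
        refine Finset.sum_congr rfl fun i _ => ?_
        rw [cunit_apply, smul_mul_assoc, one_mul]
    _ = f a := sum_counit_smul f r

lemma conv_cunit_right (f : L →ₗ[k] B) : conv f cunit = f := by
  ext a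
  have r := ℛ k a
  rw [conv_repr _ _ r]
  calc ∑ i ∈ r.index, f (r.left i) * cunit (r.right i)
      = ∑ i ∈ r.index, counit (R := k) (r.right i) • f (r.left i) := by
        refine Finset.sum_congr rfl fun i _ => ?_
        rw [cunit_apply, mul_smul_comm, mul_one]
    _ = f a := sum_smul_counit f r

lemma conv_assoc (f g h : L →ₗ[k] B) : conv (conv f g) h = conv f (conv g h) := by
  ext a
  have r := ℛ k a
  have r1 : ∀ i : _, Coalgebra.Repr k (r.left i) (_ × _) := fun i => ℛ k (r.left i)
  have r2 : ∀ i : _, Coalgebra.Repr k (r.right i) (_ × _) := fun i => ℛ k (r.right i)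
  have key := sum_map_tmul_tmul_eq (R := k) (f : L →ₗ[k] B) (g : L →ₗ[k] B) (h : L →ₗ[k] B)
      a (repr := r) (a₁ := r1) (a₂ := r2)
  -- apply multiplication collapse μ : B ⊗ (B ⊗ B) → B
  have mu : ∀ x y z : B, (LinearMap.mul' k B ∘ₗ LinearMap.lTensor B (LinearMap.mul' k B))
      (x ⊗ₜ[k] (y ⊗ₜ[k] z)) = x * (y * z) := by
    intro x y z; simp
  have key2 := congrArg (LinearMap.mul' k B ∘ₗ LinearMap.lTensor B (LinearMap.mul' k B)) key
  simp only [map_sum, mu] at key2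
  rw [conv_repr (conv f g) h r, conv_repr f (conv g h) r]
  calc ∑ i ∈ r.index, conv f g (r.left i) * h (r.right i)
      = ∑ i ∈ r.index, ∑ j ∈ (r1 i).index,
          f ((r1 i).left j) * (g ((r1 i).right j) * h (r.right i)) := by
        refine Finset.sum_congr rfl fun i _ => ?_
        rw [conv_repr f g (r1 i), Finset.sum_mul]
        exact Finset.sum_congr rfl fun j _ => (mul_assoc _ _ _)
    _ = ∑ i ∈ r.index, ∑ j ∈ (r2 i).index,
          f (r.left i) * (g ((r2 i).left j) * h ((r2 i).right j)) := key2.symm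
    _ = ∑ i ∈ r.index, f (r.left i) * conv g h (r.right i) := by
        refine Finset.sum_congr rfl fun i _ => ?_
        rw [conv_repr g h (r2 i), Finset.mul_sum]

lemma conv_unique {m f g : L →ₗ[k] B} (h1 : conv f m = cunit) (h2 : conv m g = cunit) :
    f = g := by
  have : conv f (conv m g) = conv (conv f m) g := (conv_assoc f m g).symm
  rw [h1, h2, conv_cunit_right, conv_cunit_left] at this
  exact this

end ConvOne

section ConvTwo
variable {K B : Type*} [Ring K] [HopfAlgebra k K] [Ring B] [Algebra k B]

/-- Convolution on bilinear maps `K × K → B`. -/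
noncomputable def conv₂ (φ ψ : K →ₗ[k] K →ₗ[k] B) : K →ₗ[k] K →ₗ[k] B :=
  TensorProduct.curry <| LinearMap.mul' k B ∘ₗ
    TensorProduct.map (TensorProduct.lift φ) (TensorProduct.lift ψ) ∘ₗ
    (TensorProduct.tensorTensorTensorComm k K K K K).toLinearMap ∘ₗ
    TensorProduct.map (Coalgebra.comul) (Coalgebra.comul)

noncomputable def cunit₂ : K →ₗ[k] K →ₗ[k] B :=
  LinearMap.smulRight (Coalgebra.counit (R := k))
    ((Algebra.linearMap k B) ∘ₗ Coalgebra.counit (R := k))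

lemma cunit₂_apply (a b : K) : (cunit₂ (k := k) (K := K) (B := B)) a b
    = counit (R := k) a • counit (R := k) b • (1 : B) := by
  simp [cunit₂, Algebra.smul_def]

lemma conv₂_repr (φ ψ : K →ₗ[k] K →ₗ[k] B) {a b : K}
    {ι₁ ι₂ : Type*} (ra : Coalgebra.Repr k a ι₁) (rb : Coalgebra.Repr k b ι₂) :
    conv₂ φ ψ a b = ∑ i ∈ ra.index, ∑ j ∈ rb.index,
      φ (ra.left i) (rb.left j) * ψ (ra.right i) (rb.right j) := by
  have : Coalgebra.comul (R := k) a ⊗ₜ[k] Coalgebra.comul (R := k) b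
      = ∑ i ∈ ra.index, ∑ j ∈ rb.index,
        (ra.left i ⊗ₜ[k] ra.right i) ⊗ₜ[k] (rb.left j ⊗ₜ[k] rb.right j) := by
    rw [← ra.eq, ← rb.eq, TensorProduct.sum_tmul]
    exact Finset.sum_congr rfl fun i _ => by rw [TensorProduct.tmul_sum]
  simp only [conv₂, TensorProduct.curry_apply, LinearMap.comp_apply, TensorProduct.map_tmul,
    this, map_sum, LinearEquiv.coe_coe, TensorProduct.tensorTensorTensorComm_tmul,
    TensorProduct.lift.tmul, LinearMap.mul'_apply]

lemma conv₂_cunit_left (φ : K →ₗ[k] K →ₗ[k] B) : conv₂ cunit₂ φ = φ := by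
  ext a b
  have ra := ℛ k a; have rb := ℛ k b
  rw [conv₂_repr _ _ ra rb]
  calc ∑ i ∈ ra.index, ∑ j ∈ rb.index, cunit₂ (ra.left i) (rb.left j)
        * φ (ra.right i) (rb.right j)
      = ∑ i ∈ ra.index, counit (R := k) (ra.left i) •
          ∑ j ∈ rb.index, counit (R := k) (rb.left j) • φ (ra.right i) (rb.right j) := by
        refine Finset.sum_congr rfl fun i _ => ?_
        rw [Finset.smul_sum]
        refine Finset.sum_congr rfl fun j _ => ?_
        rw [cunit₂_apply, smul_mul_assoc, smul_mul_assoc, one_mul, smul_comm]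
    _ = ∑ i ∈ ra.index, counit (R := k) (ra.left i) • (φ (ra.right i) b) := by
        refine Finset.sum_congr rfl fun i _ => ?_
        rw [sum_counit_smul (φ (ra.right i)) rb]
    _ = φ a b := by
        have := sum_counit_smul (φ.flip b) ra
        simpa using this

lemma conv₂_cunit_right (φ : K →ₗ[k] K →ₗ[k] B) : conv₂ φ cunit₂ = φ := by
  ext a b
  have ra := ℛ k a; have rb := ℛ k b
  rw [conv₂_repr _ _ ra rb]
  calc ∑ i ∈ ra.index, ∑ j ∈ rb.index, φ (ra.left i) (rb.left j)
        * cunit₂ (ra.right i) (rb.right j)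
      = ∑ i ∈ ra.index, counit (R := k) (ra.right i) •
          ∑ j ∈ rb.index, counit (R := k) (rb.right j) • φ (ra.left i) (rb.left j) := by
        refine Finset.sum_congr rfl fun i _ => ?_
        rw [Finset.smul_sum]
        refine Finset.sum_congr rfl fun j _ => ?_
        rw [cunit₂_apply, mul_smul_comm, mul_smul_comm, mul_one, smul_comm]
    _ = ∑ i ∈ ra.index, counit (R := k) (ra.right i) • (φ (ra.left i) b) := by
        refine Finset.sum_congr rfl fun i _ => ?_
        rw [sum_smul_counit (φ (ra.left i)) rb]
    _ = φ a b := by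
        have := sum_smul_counit (φ.flip b) ra
        simpa using this

lemma sum_swap4 {i1 i3 M : Type*} {i2 : i1 → Type*} {i4 : i3 → Type*}
    [AddCommMonoid M] (A : Finset i1)
    (C : ∀ i, Finset (i2 i)) (B : Finset i3) (D : ∀ j, Finset (i4 j))
    (f : ∀ i, i2 i → ∀ j, i4 j → M) :
    ∑ i ∈ A, ∑ s ∈ C i, ∑ j ∈ B, ∑ t ∈ D j, f i s j t
      = ∑ j ∈ B, ∑ t ∈ D j, ∑ i ∈ A, ∑ s ∈ C i, f i s j t := by
  calc ∑ i ∈ A, ∑ s ∈ C i, ∑ j ∈ B, ∑ t ∈ D j, f i s j t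
      = ∑ i ∈ A, ∑ j ∈ B, ∑ s ∈ C i, ∑ t ∈ D j, f i s j t :=
        Finset.sum_congr rfl fun i _ => Finset.sum_comm
    _ = ∑ j ∈ B, ∑ i ∈ A, ∑ s ∈ C i, ∑ t ∈ D j, f i s j t := Finset.sum_comm
    _ = ∑ j ∈ B, ∑ i ∈ A, ∑ t ∈ D j, ∑ s ∈ C i, f i s j t :=
        Finset.sum_congr rfl fun j _ => Finset.sum_congr rfl fun i _ => Finset.sum_comm
    _ = ∑ j ∈ B, ∑ t ∈ D j, ∑ i ∈ A, ∑ s ∈ C i, f i s j t :=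
        Finset.sum_congr rfl fun j _ => Finset.sum_comm

lemma conv₂_assoc (φ ψ χ : K →ₗ[k] K →ₗ[k] B) :
    conv₂ (conv₂ φ ψ) χ = conv₂ φ (conv₂ ψ χ) := by
  ext a b
  have ra := ℛ k a; have rb := ℛ k b
  have ra1 : ∀ i : _, Coalgebra.Repr k (ra.left i) (_ × _) := fun i => ℛ k (ra.left i)
  have ra2 : ∀ i : _, Coalgebra.Repr k (ra.right i) (_ × _) := fun i => ℛ k (ra.right i)
  have rb1 : ∀ j : _, Coalgebra.Repr k (rb.left j) (_ × _) := fun j => ℛ k (rb.left j)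
  have rb2 : ∀ j : _, Coalgebra.Repr k (rb.right j) (_ × _) := fun j => ℛ k (rb.right j)
  -- useful collapse map
  have mu : ∀ x y z : B, (LinearMap.mul' k B ∘ₗ LinearMap.lTensor B (LinearMap.mul' k B))
      (x ⊗ₜ[k] (y ⊗ₜ[k] z)) = x * (y * z) := by intro x y z; simp
  rw [conv₂_repr _ _ ra rb, conv₂_repr _ _ ra rb]
  -- expand both sides fully
  have lhs : ∑ i ∈ ra.index, ∑ j ∈ rb.index,
      conv₂ φ ψ (ra.left i) (rb.left j) * χ (ra.right i) (rb.right j)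
      = ∑ i ∈ ra.index, ∑ j ∈ rb.index, ∑ s ∈ (ra1 i).index, ∑ t ∈ (rb1 j).index,
        φ ((ra1 i).left s) ((rb1 j).left t) *
          (ψ ((ra1 i).right s) ((rb1 j).right t) * χ (ra.right i) (rb.right j)) := by
    refine Finset.sum_congr rfl fun i _ => Finset.sum_congr rfl fun j _ => ?_
    rw [conv₂_repr _ _ (ra1 i) (rb1 j), Finset.sum_mul]
    refine Finset.sum_congr rfl fun s _ => ?_
    rw [Finset.sum_mul]
    exact Finset.sum_congr rfl fun t _ => mul_assoc _ _ _
  have rhs : ∑ i ∈ ra.index, ∑ j ∈ rb.index,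
      φ (ra.left i) (rb.left j) * conv₂ ψ χ (ra.right i) (rb.right j)
      = ∑ i ∈ ra.index, ∑ j ∈ rb.index, ∑ s ∈ (ra2 i).index, ∑ t ∈ (rb2 j).index,
        φ (ra.left i) (rb.left j) *
          (ψ ((ra2 i).left s) ((rb2 j).left t) * χ ((ra2 i).right s) ((rb2 j).right t)) := by
    refine Finset.sum_congr rfl fun i _ => Finset.sum_congr rfl fun j _ => ?_
    rw [conv₂_repr _ _ (ra2 i) (rb2 j), Finset.mul_sum]
    refine Finset.sum_congr rfl fun s _ => ?_
    rw [Finset.mul_sum]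
  rw [lhs, rhs]
  -- step 1: for fixed a-legs, swap the b-side using coassociativity of b
  have step1 : ∀ (p q z : K), ∑ j ∈ rb.index, ∑ t ∈ (rb1 j).index,
      φ p ((rb1 j).left t) * (ψ q ((rb1 j).right t) * χ z (rb.right j))
      = ∑ j ∈ rb.index, ∑ t ∈ (rb2 j).index,
      φ p (rb.left j) * (ψ q ((rb2 j).left t) * χ z ((rb2 j).right t)) := by
    intro p q z
    have key := sum_map_tmul_tmul_eq (R := k) (φ p) (ψ q) (χ z) b
      (repr := rb) (a₁ := rb1) (a₂ := rb2)
    have key2 := congrArg (LinearMap.mul' k B ∘ₗ LinearMap.lTensor B (LinearMap.mul' k B)) key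
    simp only [map_sum, mu] at key2
    exact key2.symm
  -- step 2: for fixed b-legs, swap the a-side
  have step2 : ∀ (u v w : K), ∑ i ∈ ra.index, ∑ s ∈ (ra1 i).index,
      φ ((ra1 i).left s) u * (ψ ((ra1 i).right s) v * χ (ra.right i) w)
      = ∑ i ∈ ra.index, ∑ s ∈ (ra2 i).index,
      φ (ra.left i) u * (ψ ((ra2 i).left s) v * χ ((ra2 i).right s) w) := by
    intro u v w
    have key := sum_map_tmul_tmul_eq (R := k) (φ.flip u) (ψ.flip v) (χ.flip w) a
      (repr := ra) (a₁ := ra1) (a₂ := ra2)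
    have key2 := congrArg (LinearMap.mul' k B ∘ₗ LinearMap.lTensor B (LinearMap.mul' k B)) key
    simp only [map_sum, mu] at key2
    simpa using key2.symm
  calc ∑ i ∈ ra.index, ∑ j ∈ rb.index, ∑ s ∈ (ra1 i).index, ∑ t ∈ (rb1 j).index,
        φ ((ra1 i).left s) ((rb1 j).left t) *
          (ψ ((ra1 i).right s) ((rb1 j).right t) * χ (ra.right i) (rb.right j))
      = ∑ i ∈ ra.index, ∑ s ∈ (ra1 i).index, ∑ j ∈ rb.index, ∑ t ∈ (rb1 j).index,
        φ ((ra1 i).left s) ((rb1 j).left t) *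
          (ψ ((ra1 i).right s) ((rb1 j).right t) * χ (ra.right i) (rb.right j)) := by
        exact Finset.sum_congr rfl fun i _ => Finset.sum_comm
    _ = ∑ i ∈ ra.index, ∑ s ∈ (ra1 i).index, ∑ j ∈ rb.index, ∑ t ∈ (rb2 j).index,
        φ ((ra1 i).left s) (rb.left j) *
          (ψ ((ra1 i).right s) ((rb2 j).left t) * χ (ra.right i) ((rb2 j).right t)) := by
        exact Finset.sum_congr rfl fun i _ => Finset.sum_congr rfl fun s _ =>
          step1 _ _ _
    _ = ∑ j ∈ rb.index, ∑ t ∈ (rb2 j).index, ∑ i ∈ ra.index, ∑ s ∈ (ra1 i).index,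
        φ ((ra1 i).left s) (rb.left j) *
          (ψ ((ra1 i).right s) ((rb2 j).left t) * χ (ra.right i) ((rb2 j).right t)) := by
        exact sum_swap4 ra.index (fun i => (ra1 i).index) rb.index (fun j => (rb2 j).index)
          (fun i s j t => φ ((ra1 i).left s) (rb.left j) *
            (ψ ((ra1 i).right s) ((rb2 j).left t) * χ (ra.right i) ((rb2 j).right t)))
    _ = ∑ j ∈ rb.index, ∑ t ∈ (rb2 j).index, ∑ i ∈ ra.index, ∑ s ∈ (ra2 i).index,
        φ (ra.left i) (rb.left j) *
          (ψ ((ra2 i).left s) ((rb2 j).left t) * χ ((ra2 i).right s) ((rb2 j).right t)) :=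
        Finset.sum_congr rfl fun j _ => Finset.sum_congr rfl fun t _ => step2 _ _ _
    _ = ∑ i ∈ ra.index, ∑ s ∈ (ra2 i).index, ∑ j ∈ rb.index, ∑ t ∈ (rb2 j).index,
        φ (ra.left i) (rb.left j) *
          (ψ ((ra2 i).left s) ((rb2 j).left t) * χ ((ra2 i).right s) ((rb2 j).right t)) :=
        sum_swap4 rb.index (fun j => (rb2 j).index) ra.index (fun i => (ra2 i).index)
          (fun j t i s => φ (ra.left i) (rb.left j) *
            (ψ ((ra2 i).left s) ((rb2 j).left t) * χ ((ra2 i).right s) ((rb2 j).right t)))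
    _ = ∑ i ∈ ra.index, ∑ j ∈ rb.index, ∑ s ∈ (ra2 i).index, ∑ t ∈ (rb2 j).index,
        φ (ra.left i) (rb.left j) *
          (ψ ((ra2 i).left s) ((rb2 j).left t) * χ ((ra2 i).right s) ((rb2 j).right t)) :=
        Finset.sum_congr rfl fun i _ => Finset.sum_comm

lemma conv₂_unique {m f g : K →ₗ[k] K →ₗ[k] B} (h1 : conv₂ f m = cunit₂)
    (h2 : conv₂ m g = cunit₂) : f = g := by
  have : conv₂ f (conv₂ m g) = conv₂ (conv₂ f m) g := (conv₂_assoc f m g).symm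
  rw [h1, h2, conv₂_cunit_right, conv₂_cunit_left] at this
  exact this

end ConvTwo

section Antipode
variable {K : Type*} [Ring K] [HopfAlgebra k K]

/-- A representation of `comul (a * b)` built from representations of `comul a`, `comul b`. -/
noncomputable def mulRepr {a b : K} {ι₁ ι₂ : Type*} (ra : Coalgebra.Repr k a ι₁)
    (rb : Coalgebra.Repr k b ι₂) :
    Coalgebra.Repr k (a * b) (ι₁ × ι₂) where
  index := ra.index ×ˢ rb.index
  left := fun p => ra.left p.1 * rb.left p.2
  right := fun p => ra.right p.1 * rb.right p.2
  eq := by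
    rw [Bialgebra.comul_mul, ← ra.eq, ← rb.eq, Finset.sum_mul_sum]
    rw [Finset.sum_product]
    refine Finset.sum_congr rfl fun i _ => Finset.sum_congr rfl fun j _ => ?_
    simp [Algebra.TensorProduct.tmul_mul_tmul]

lemma comul_one' : Coalgebra.comul (R := k) (1 : K) = (1 : K) ⊗ₜ[k] 1 := by
  have h : Coalgebra.comul (R := k) (1 : K) = (1 : K ⊗[k] K) :=
    map_one (Bialgebra.comulAlgHom k K)
  rw [h, Algebra.TensorProduct.one_def]

lemma counit_one' : Coalgebra.counit (R := k) (1 : K) = (1 : k) :=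
  map_one (Bialgebra.counitAlgHom k K)

lemma antipode_one' : HopfAlgebra.antipode (R := k) (1 : K) = 1 := by
  have h := HopfAlgebra.mul_antipode_rTensor_comul_apply (R := k) (A := K) 1
  rw [comul_one'] at h
  simpa [counit_one'] using h

lemma antipode_mul (a b : K) :
    HopfAlgebra.antipode (R := k) (a * b)
      = HopfAlgebra.antipode (R := k) b * HopfAlgebra.antipode (R := k) a := by
  set S : K →ₗ[k] K := HopfAlgebra.antipode (R := k) with hS
  set M : K →ₗ[k] K →ₗ[k] K := LinearMap.mul k K with hM
  set F : K →ₗ[k] K →ₗ[k] K := (LinearMap.mul k K).compr₂ S with hF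
  set G : K →ₗ[k] K →ₗ[k] K := ((LinearMap.mul k K ∘ₗ S).compl₂ S).flip with hG
  have hFM : conv₂ F M = cunit₂ := by
    ext x y
    have rx := ℛ k x; have ry := ℛ k y
    rw [conv₂_repr _ _ rx ry, cunit₂_apply]
    have key := HopfAlgebra.sum_antipode_mul_eq_smul (R := k) (mulRepr rx ry)
    simp only [mulRepr] at key
    rw [Finset.sum_product] at key
    calc ∑ i ∈ rx.index, ∑ j ∈ ry.index, F (rx.left i) (ry.left j) * M (rx.right i) (ry.right j)
        = ∑ i ∈ rx.index, ∑ j ∈ ry.index,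
            S ((mulRepr rx ry).left (i, j)) * ((mulRepr rx ry).right (i, j)) := by
          refine Finset.sum_congr rfl fun i _ => Finset.sum_congr rfl fun j _ => rfl
      _ = Coalgebra.counit (R := k) (x * y) • (1 : K) := key
      _ = Coalgebra.counit (R := k) x • Coalgebra.counit (R := k) y • (1 : K) := by
          rw [Bialgebra.counit_mul, mul_smul]
  have hMG : conv₂ M G = cunit₂ := by
    ext x y
    have rx := ℛ k x; have ry := ℛ k y
    rw [conv₂_repr _ _ rx ry, cunit₂_apply]
    have inner : ∀ i ∈ rx.index, ∑ j ∈ ry.index,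
        M (rx.left i) (ry.left j) * G (rx.right i) (ry.right j)
        = Coalgebra.counit (R := k) y • (rx.left i * S (rx.right i)) := by
      intro i _
      have hcol := HopfAlgebra.sum_mul_antipode_eq_smul (R := k) ry
      calc ∑ j ∈ ry.index, M (rx.left i) (ry.left j) * G (rx.right i) (ry.right j)
          = ∑ j ∈ ry.index, rx.left i * ((ry.left j * S (ry.right j)) * S (rx.right i)) := by
            refine Finset.sum_congr rfl fun j _ => ?_
            show rx.left i * ry.left j * (S (ry.right j) * S (rx.right i)) = _
            rw [mul_assoc, ← mul_assoc (ry.left j)]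
        _ = rx.left i * ((∑ j ∈ ry.index, ry.left j * S (ry.right j)) * S (rx.right i)) := by
            rw [Finset.sum_mul, Finset.mul_sum]
        _ = Coalgebra.counit (R := k) y • (rx.left i * S (rx.right i)) := by
            rw [hcol, smul_mul_assoc, one_mul, mul_smul_comm]
    calc ∑ i ∈ rx.index, ∑ j ∈ ry.index,
          M (rx.left i) (ry.left j) * G (rx.right i) (ry.right j)
        = ∑ i ∈ rx.index, Coalgebra.counit (R := k) y • (rx.left i * S (rx.right i)) :=
          Finset.sum_congr rfl inner
      _ = Coalgebra.counit (R := k) y • ∑ i ∈ rx.index, rx.left i * S (rx.right i) := by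
          rw [Finset.smul_sum]
      _ = Coalgebra.counit (R := k) x • Coalgebra.counit (R := k) y • (1 : K) := by
          rw [HopfAlgebra.sum_mul_antipode_eq_smul (R := k) rx, smul_comm]
  have h := conv₂_unique hFM hMG
  exact congrArg (fun t : K →ₗ[k] K →ₗ[k] K => t a b) h

end Antipode

section ComulAntipode
variable {K : Type*} [Ring K] [HopfAlgebra k K]

local notation "S" => (HopfAlgebra.antipode (R := k) (A := K))

lemma comul_antipode_aux :
    (Coalgebra.comul (R := k) (A := K)) ∘ₗ S
      = (TensorProduct.comm k K K).toLinearMap ∘ₗ TensorProduct.map S S ∘ₗ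
        Coalgebra.comul := by
  set G : K →ₗ[k] K ⊗[k] K :=
    (TensorProduct.comm k K K).toLinearMap ∘ₗ TensorProduct.map S S ∘ₗ Coalgebra.comul with hG
  refine (conv_unique (m := (Coalgebra.comul : K →ₗ[k] K ⊗[k] K)) ?_ ?_).symm
  · -- conv G comul = cunit
    ext x
    have r := ℛ k x
    have rl : ∀ i : _, Coalgebra.Repr k (r.left i) (_ × _) := fun i => ℛ k (r.left i)
    have rr : ∀ i : _, Coalgebra.Repr k (r.right i) (_ × _) := fun i => ℛ k (r.right i)
    rw [conv_repr _ _ r, cunit_apply]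
    -- the collapse map Ξ
    set Ξ : K ⊗[k] (K ⊗[k] K) →ₗ[k] K ⊗[k] K :=
      (LinearMap.mul' k (K ⊗[k] K)) ∘ₗ
        (TensorProduct.map ((TensorProduct.comm k K K).toLinearMap ∘ₗ TensorProduct.map S S)
          Coalgebra.comul) ∘ₗ (TensorProduct.assoc k K K K).symm.toLinearMap with hXi
    have Xi_tmul : ∀ (u v w : K), Ξ (u ⊗ₜ[k] (v ⊗ₜ[k] w))
        = ((S v) ⊗ₜ[k] (S u)) * Coalgebra.comul (R := k) w := by
      intro u v w
      simp [hXi, TensorProduct.assoc_symm_tmul]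
    have key := sum_tmul_tmul_eq (R := k) r rl rr
    have key2 := congrArg Ξ key
    simp only [map_sum, Xi_tmul] at key2
    have lhs_eq : ∑ i ∈ r.index, G (r.left i) * Coalgebra.comul (R := k) (r.right i)
        = ∑ i ∈ r.index, ∑ j ∈ (rl i).index,
          ((S ((rl i).right j)) ⊗ₜ[k] (S ((rl i).left j))) * Coalgebra.comul (R := k) (r.right i) := by
      refine Finset.sum_congr rfl fun i _ => ?_
      have hGi : G (r.left i) = ∑ j ∈ (rl i).index,
          (S ((rl i).right j)) ⊗ₜ[k] (S ((rl i).left j)) := by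
        simp only [hG, LinearMap.comp_apply, ← (rl i).eq, map_sum, TensorProduct.map_tmul,
          LinearEquiv.coe_coe, TensorProduct.comm_tmul]
      rw [hGi, Finset.sum_mul]
    rw [lhs_eq, key2]
    -- now the inner collapse for each i
    have inner : ∀ i ∈ r.index, ∑ s ∈ (rr i).index,
        ((S ((rr i).left s)) ⊗ₜ[k] (S (r.left i))) * Coalgebra.comul (R := k) ((rr i).right s)
        = (1 : K) ⊗ₜ[k] (S (r.left i) * r.right i) := by
      intro i _
      have rru : ∀ s : _, Coalgebra.Repr k ((rr i).left s) (_ × _) := fun s => ℛ k ((rr i).left s)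
      have rrv : ∀ s : _, Coalgebra.Repr k ((rr i).right s) (_ × _) := fun s => ℛ k ((rr i).right s)
      set Θ : K ⊗[k] (K ⊗[k] K) →ₗ[k] K ⊗[k] K :=
        (TensorProduct.map (LinearMap.mul' k K ∘ₗ TensorProduct.map S LinearMap.id)
          (LinearMap.mulLeft k (S (r.left i)))) ∘ₗ (TensorProduct.assoc k K K K).symm.toLinearMap
        with hTheta
      have Theta_tmul : ∀ u v w : K, Θ (u ⊗ₜ[k] (v ⊗ₜ[k] w))
          = ((S u) * v) ⊗ₜ[k] (S (r.left i) * w) := by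
        intro u v w
        simp [hTheta, TensorProduct.assoc_symm_tmul]
      have keyi := sum_tmul_tmul_eq (R := k) (rr i) rru rrv
      have keyi2 := congrArg Θ keyi
      simp only [map_sum, Theta_tmul] at keyi2
      have lhs2 : ∑ s ∈ (rr i).index,
          ((S ((rr i).left s)) ⊗ₜ[k] (S (r.left i))) * Coalgebra.comul (R := k) ((rr i).right s)
          = ∑ s ∈ (rr i).index, ∑ t ∈ (rrv s).index,
            ((S ((rr i).left s)) * (rrv s).left t) ⊗ₜ[k] (S (r.left i) * (rrv s).right t) := by
        refine Finset.sum_congr rfl fun s _ => ?_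
        rw [← (rrv s).eq, Finset.mul_sum]
        refine Finset.sum_congr rfl fun t _ => ?_
        rw [Algebra.TensorProduct.tmul_mul_tmul]
      rw [lhs2, ← keyi2]
      have step : ∀ s ∈ (rr i).index, ∑ j ∈ (rru s).index,
          ((S ((rru s).left j)) * (rru s).right j) ⊗ₜ[k] (S (r.left i) * (rr i).right s)
          = Coalgebra.counit (R := k) ((rr i).left s) • ((1:K) ⊗ₜ[k] (S (r.left i) * (rr i).right s)) := by
        intro s _
        rw [← TensorProduct.sum_tmul, HopfAlgebra.sum_antipode_mul_eq_smul (R := k) (rru s),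
          TensorProduct.smul_tmul']
      rw [Finset.sum_congr rfl step]
      have : ∑ s ∈ (rr i).index,
          Coalgebra.counit (R := k) ((rr i).left s) • ((1:K) ⊗ₜ[k] (S (r.left i) * (rr i).right s))
          = (1:K) ⊗ₜ[k] (S (r.left i) * r.right i) := by
        have hf := sum_counit_smul (B' := K ⊗[k] K)
          ((TensorProduct.mk k K K 1) ∘ₗ (LinearMap.mulLeft k (S (r.left i)))) (rr i)
        simpa using hf
      rw [this]
    rw [Finset.sum_congr rfl inner, ← TensorProduct.tmul_sum,
      HopfAlgebra.sum_antipode_mul_eq_smul (R := k) r, TensorProduct.tmul_smul]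
    rw [Algebra.TensorProduct.one_def]
  · -- conv comul (comul ∘ S) = cunit
    ext x
    have r := ℛ k x
    rw [conv_repr _ _ r, cunit_apply]
    have : ∑ i ∈ r.index, Coalgebra.comul (R := k) (r.left i)
          * (Coalgebra.comul ∘ₗ S) (r.right i)
        = Coalgebra.comul (R := k) (∑ i ∈ r.index, r.left i * S (r.right i)) := by
      rw [map_sum]
      exact Finset.sum_congr rfl fun i _ => (Bialgebra.comul_mul _ _).symm
    rw [this, HopfAlgebra.sum_mul_antipode_eq_smul (R := k) r, map_smul, comul_one',
      Algebra.TensorProduct.one_def]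

lemma comul_antipode_repr {a : K} {ι : Type*} (r : Coalgebra.Repr k a ι) :
    Coalgebra.comul (R := k) (S a) = ∑ i ∈ r.index, (S (r.right i)) ⊗ₜ[k] (S (r.left i)) := by
  have h := congrArg (fun φ : K →ₗ[k] K ⊗[k] K => φ a) comul_antipode_aux
  simp only [LinearMap.comp_apply] at h
  rw [h, ← r.eq, map_sum]
  simp [TensorProduct.map_tmul]

/-- A representation of `comul (S a)`. -/
noncomputable def antipodeRepr {a : K} {ι : Type*} (r : Coalgebra.Repr k a ι) :
    Coalgebra.Repr k (S a) ι where
  index := r.index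
  left := fun i => S (r.right i)
  right := fun i => S (r.left i)
  eq := (comul_antipode_repr r).symm

end ComulAntipode


section Core
variable {K : Type*} [Ring K] [HopfAlgebra k K] [FiniteDimensional k K]

local notation "S" => (HopfAlgebra.antipode (R := k) (A := K))
local notation "Vk" => (K →ₗ[k] k)
local notation "bb" => (Module.finBasis k K)

/-- `Fmap f x = ∑ f(x₂) • x₁`. -/
noncomputable def Fmap (f : Vk) : K →ₗ[k] K :=
  (TensorProduct.rid k K).toLinearMap ∘ₗ LinearMap.lTensor K f ∘ₗ Coalgebra.comul

lemma Fmap_repr (f : Vk) {x : K} {ι : Type*} (r : Coalgebra.Repr k x ι) :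
    Fmap f x = ∑ i ∈ r.index, f (r.right i) • r.left i := by
  simp only [Fmap, LinearMap.comp_apply, ← r.eq, map_sum, LinearMap.lTensor_tmul,
    LinearEquiv.coe_coe, TensorProduct.rid_tmul]

lemma Fmap_addf (f g : Vk) : Fmap (f + g) = Fmap f + Fmap g := by
  ext x
  have r := ℛ k x
  simp [Fmap_repr _ r, add_smul, Finset.sum_add_distrib]

lemma Fmap_smulf (c : k) (f : Vk) : Fmap (c • f) = c • Fmap f := by
  ext x
  have r := ℛ k x
  simp [Fmap_repr _ r, Finset.smul_sum, smul_smul]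

/-- Evaluation of `Fmap` at a fixed point, as a linear map in `f`. -/
noncomputable def Fat (x : K) : Vk →ₗ[k] K where
  toFun f := Fmap f x
  map_add' f g := by show Fmap (f + g) x = Fmap f x + Fmap g x; rw [Fmap_addf]; rfl
  map_smul' c f := by
    show Fmap (c • f) x = _
    rw [Fmap_smulf]; rfl

/-- The right "action" of `K` on the dual: `actMap h g = g((-) * S h)`. -/
noncomputable def actMap (h : K) : Vk →ₗ[k] Vk where
  toFun g := g ∘ₗ LinearMap.mulRight k (S h)
  map_add' g g' := LinearMap.add_comp _ _ _
  map_smul' c g := LinearMap.smul_comp _ _ _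

lemma actMap_apply (h : K) (g : Vk) (x : K) : actMap h g x = g (x * S h) := rfl

lemma actMap_comp (h h' : K) (g : Vk) : actMap h' (actMap h g) = actMap (h * h') g := by
  ext x
  simp only [actMap_apply, antipode_mul, mul_assoc]

lemma actMap_one (g : Vk) : actMap 1 g = g := by
  ext x
  simp [actMap_apply, antipode_one']

lemma actMap_addh (h h' : K) (g : Vk) :
    actMap (h + h') g = actMap h g + actMap h' g := by
  ext x
  simp [actMap_apply, map_add, mul_add]

lemma actMap_smulh (c : k) (h : K) (g : Vk) :
    actMap (c • h) g = c • actMap h g := by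
  ext x
  simp [actMap_apply, map_smul, mul_smul_comm]

/-- `μ : V ⊗ K → V`, `g ⊗ y ↦ actMap (S y) g`. -/
noncomputable def muMap : (Vk ⊗[k] K) →ₗ[k] Vk :=
  TensorProduct.lift <| LinearMap.mk₂ k (fun g y => actMap (S y) g)
    (fun g g' y => map_add _ _ _)
    (fun c g y => map_smul _ _ _)
    (fun g y y' => by
      show actMap (S (y + y')) g = actMap (S y) g + actMap (S y') g
      rw [map_add, actMap_addh])
    (fun c g y => by
      show actMap (S (c • y)) g = c • actMap (S y) g
      rw [map_smul, actMap_smulh])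

lemma muMap_tmul (g : Vk) (y : K) : muMap (g ⊗ₜ[k] y) = actMap (S y) g := rfl

/-- The coaction `coactL f = ∑ᵢ eⁱ ⊗ F f (eᵢ)`. -/
noncomputable def coactL : Vk →ₗ[k] (Vk ⊗[k] K) :=
  ∑ i : Fin (Module.finrank k K),
    (TensorProduct.mk k Vk K ((bb).coord i)) ∘ₗ (Fat (bb i))

lemma coactL_apply (f : Vk) :
    coactL f = ∑ i : Fin (Module.finrank k K), ((bb).coord i) ⊗ₜ[k] (Fmap f (bb i)) := by
  simp only [coactL, LinearMap.sum_apply, LinearMap.comp_apply, TensorProduct.mk_apply]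
  rfl

/-- Evaluation in the first (dual) factor. -/
noncomputable def evW (W : Type*) [AddCommGroup W] [Module k W] (x : K) :
    (Vk ⊗[k] W) →ₗ[k] W :=
  (TensorProduct.lid k W).toLinearMap ∘ₗ LinearMap.rTensor W (LinearMap.applyₗ x)

lemma evW_tmul (W : Type*) [AddCommGroup W] [Module k W] (x : K) (g : Vk) (w : W) :
    evW W x (g ⊗ₜ[k] w) = g x • w := by
  simp [evW]

lemma evW_inj (W : Type*) [AddCommGroup W] [Module k W] {t u : Vk ⊗[k] W}
    (h : ∀ x, evW W x t = evW W x u) : t = u := by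
  classical
  have hdt : ∀ (t : Vk ⊗[k] W) (x : K), dualTensorHom k K W t x = evW W x t := by
    intro t x
    induction t using TensorProduct.induction_on with
    | zero => simp
    | tmul g w => simp [evW_tmul, dualTensorHom_apply]
    | add a b ha hb => simp only [map_add, LinearMap.add_apply, ha, hb]
  have heq : dualTensorHom k K W t = dualTensorHom k K W u :=
    LinearMap.ext fun x => by rw [hdt, hdt]; exact h x
  have := congrArg (dualTensorHomEquivOfBasis (N := W) (Module.Free.chooseBasis k K)).symm heq
  rwa [dualTensorHomEquivOfBasis_symm_cancel_left,
    dualTensorHomEquivOfBasis_symm_cancel_left] at this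

lemma dual_expansion (g : Vk) :
    ∑ i : Fin (Module.finrank k K), g (bb i) • (bb).coord i = g := by
  ext x
  rw [LinearMap.sum_apply]
  conv_rhs => rw [← Module.Basis.sum_repr bb x]
  rw [map_sum]
  refine Finset.sum_congr rfl fun i _ => ?_
  rw [LinearMap.smul_apply, Module.Basis.coord_apply, map_smul]
  simp [mul_comm]

lemma smul_Fmap_basis (g : Vk) (x : K) :
    ∑ i : Fin (Module.finrank k K), ((bb).coord i x) • Fmap g (bb i) = Fmap g x := by
  conv_rhs => rw [← Module.Basis.sum_repr bb x]
  rw [map_sum]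
  refine Finset.sum_congr rfl fun i _ => ?_
  rw [Module.Basis.coord_apply, map_smul]

lemma evW_coactL (f : Vk) (x : K) : evW K x (coactL f) = Fmap f x := by
  rw [coactL_apply, map_sum]
  simp only [evW_tmul]
  exact smul_Fmap_basis f x

lemma counit_Fmap (g : Vk) (u : K) :
    Coalgebra.counit (R := k) (Fmap g u) = g u := by
  have r := ℛ k u
  rw [Fmap_repr g r]
  rw [map_sum]
  have := sum_counit_smul (k := k) g r
  simp only [smul_eq_mul] at this
  rw [← this]
  refine Finset.sum_congr rfl fun i _ => ?_
  rw [map_smul]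
  simp [mul_comm]

/-- Coassociativity bridge `B1`. -/
lemma B1 (f : Vk) (x : K) :
    ∑ i : Fin (Module.finrank k K), (Fmap ((bb).coord i) x) ⊗ₜ[k] (Fmap f (bb i))
      = Coalgebra.comul (R := k) (Fmap f x) := by
  have r := ℛ k x
  have step1 : ∑ i : Fin (Module.finrank k K), (Fmap ((bb).coord i) x) ⊗ₜ[k] (Fmap f (bb i))
      = ∑ m ∈ r.index, (r.left m) ⊗ₜ[k] (Fmap f (r.right m)) := by
    calc ∑ i : Fin (Module.finrank k K), (Fmap ((bb).coord i) x) ⊗ₜ[k] (Fmap f (bb i))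
        = ∑ i : Fin (Module.finrank k K), ∑ m ∈ r.index,
            ((bb).coord i (r.right m)) • ((r.left m) ⊗ₜ[k] (Fmap f (bb i))) := by
          refine Finset.sum_congr rfl fun i _ => ?_
          rw [Fmap_repr ((bb).coord i) r, TensorProduct.sum_tmul]
          refine Finset.sum_congr rfl fun m _ => ?_
          rw [TensorProduct.smul_tmul']
      _ = ∑ m ∈ r.index, ∑ i : Fin (Module.finrank k K),
            (r.left m) ⊗ₜ[k] (((bb).coord i (r.right m)) • (Fmap f (bb i))) := by
          rw [Finset.sum_comm]
          exact Finset.sum_congr rfl fun m _ => Finset.sum_congr rfl fun i _ =>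
            (TensorProduct.tmul_smul _ _ _).symm
      _ = ∑ m ∈ r.index, (r.left m) ⊗ₜ[k] (Fmap f (r.right m)) := by
          refine Finset.sum_congr rfl fun m _ => ?_
          rw [← TensorProduct.tmul_sum, smul_Fmap_basis]
  rw [step1]
  -- now the coassociativity part
  have rl : ∀ m : _, Coalgebra.Repr k (r.left m) (_ × _) := fun m => ℛ k (r.left m)
  have rr : ∀ m : _, Coalgebra.Repr k (r.right m) (_ × _) := fun m => ℛ k (r.right m)
  set Lf : K ⊗[k] (K ⊗[k] K) →ₗ[k] K ⊗[k] K :=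
    (TensorProduct.rid k (K ⊗[k] K)).toLinearMap ∘ₗ
      LinearMap.lTensor (K ⊗[k] K) f ∘ₗ (TensorProduct.assoc k K K K).symm.toLinearMap with hLf
  have Lf_tmul : ∀ α β γ : K, Lf (α ⊗ₜ[k] (β ⊗ₜ[k] γ)) = f γ • (α ⊗ₜ[k] β) := by
    intro α β γ
    simp [hLf, TensorProduct.assoc_symm_tmul]
  have key := sum_tmul_tmul_eq (R := k) r rl rr
  have key2 := congrArg Lf key
  simp only [map_sum, Lf_tmul] at key2
  calc ∑ m ∈ r.index, (r.left m) ⊗ₜ[k] (Fmap f (r.right m))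
      = ∑ m ∈ r.index, ∑ t ∈ (rr m).index,
          f ((rr m).right t) • ((r.left m) ⊗ₜ[k] ((rr m).left t)) := by
        refine Finset.sum_congr rfl fun m _ => ?_
        rw [Fmap_repr f (rr m), TensorProduct.tmul_sum]
        exact Finset.sum_congr rfl fun t _ => (TensorProduct.tmul_smul _ _ _)
    _ = ∑ m ∈ r.index, ∑ j ∈ (rl m).index,
          f (r.right m) • (((rl m).left j) ⊗ₜ[k] ((rl m).right j)) := key2.symm
    _ = Coalgebra.comul (R := k) (Fmap f x) := by
        rw [Fmap_repr f r, map_sum]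
        refine Finset.sum_congr rfl fun m _ => ?_
        rw [map_smul, ← (rl m).eq, Finset.smul_sum]

/-- Comodule coassociativity of `coactL` (`S7c`). -/
lemma coassoc_coactL (f : Vk) :
    ∑ i : Fin (Module.finrank k K), ∑ j : Fin (Module.finrank k K),
      ((bb).coord j) ⊗ₜ[k] ((Fmap ((bb).coord i) (bb j)) ⊗ₜ[k] (Fmap f (bb i)))
    = ∑ j : Fin (Module.finrank k K),
      ((bb).coord j) ⊗ₜ[k] (Coalgebra.comul (R := k) (Fmap f (bb j))) := by
  apply evW_inj (K ⊗[k] K)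
  intro x
  simp only [map_sum, evW_tmul]
  have lhs : ∑ i : Fin (Module.finrank k K), ∑ j : Fin (Module.finrank k K),
      ((bb).coord j x) • ((Fmap ((bb).coord i) (bb j)) ⊗ₜ[k] (Fmap f (bb i)))
      = ∑ i : Fin (Module.finrank k K), (Fmap ((bb).coord i) x) ⊗ₜ[k] (Fmap f (bb i)) := by
    refine Finset.sum_congr rfl fun i _ => ?_
    calc ∑ j : Fin (Module.finrank k K),
        ((bb).coord j x) • ((Fmap ((bb).coord i) (bb j)) ⊗ₜ[k] (Fmap f (bb i)))
        = (∑ j : Fin (Module.finrank k K),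
            ((bb).coord j x) • (Fmap ((bb).coord i) (bb j))) ⊗ₜ[k] (Fmap f (bb i)) := by
          rw [TensorProduct.sum_tmul]
          exact Finset.sum_congr rfl fun j _ => (TensorProduct.smul_tmul' _ _ _).symm
      _ = (Fmap ((bb).coord i) x) ⊗ₜ[k] (Fmap f (bb i)) := by rw [smul_Fmap_basis]
  rw [lhs, B1]
  calc Coalgebra.comul (R := k) (Fmap f x)
      = Coalgebra.comul (R := k)
          (∑ j : Fin (Module.finrank k K), ((bb).coord j x) • (Fmap f (bb j))) := by
        rw [smul_Fmap_basis]
    _ = ∑ j : Fin (Module.finrank k K),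
          ((bb).coord j x) • Coalgebra.comul (R := k) (Fmap f (bb j)) := by
        rw [map_sum]
        exact Finset.sum_congr rfl fun j _ => map_smul _ _ _

/-- Module-comodule compatibility, elementwise form (`S4`). -/
lemma Fmap_act (f : Vk) (h x : K) {ι : Type*} (rh : Coalgebra.Repr k h ι) :
    Fmap (actMap h f) x
      = ∑ i ∈ rh.index, Fmap f (x * S (rh.left i)) * rh.right i := by
  have rx := ℛ k x
  have rl : ∀ i : _, Coalgebra.Repr k (rh.left i) (_ × _) := fun i => ℛ k (rh.left i)
  have rr : ∀ i : _, Coalgebra.Repr k (rh.right i) (_ × _) := fun i => ℛ k (rh.right i)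
  have rhs1 : ∀ i, Fmap f (x * S (rh.left i)) * rh.right i
      = ∑ m ∈ rx.index, ∑ j ∈ (rl i).index,
          f (rx.right m * S ((rl i).left j)) •
            (rx.left m * S ((rl i).right j) * rh.right i) := by
    intro i
    rw [Fmap_repr f (mulRepr rx (antipodeRepr (rl i))), Finset.sum_mul]
    have hprod := Finset.sum_product (s := rx.index) (t := (rl i).index)
      (f := fun p => f ((mulRepr rx (antipodeRepr (rl i))).right p) •
        (mulRepr rx (antipodeRepr (rl i))).left p * rh.right i)
    refine Eq.trans hprod ?_
    refine Finset.sum_congr rfl fun m _ => Finset.sum_congr rfl fun j _ => ?_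
    rw [smul_mul_assoc]
    rfl
  rw [Finset.sum_congr rfl fun i _ => rhs1 i]
  rw [Finset.sum_comm]
  have step : ∀ m ∈ rx.index,
      (∑ i ∈ rh.index, ∑ j ∈ (rl i).index,
        f (rx.right m * S ((rl i).left j)) •
          (rx.left m * S ((rl i).right j) * rh.right i))
      = f (rx.right m * S h) • rx.left m := by
    intro m _
    set φm : K →ₗ[k] k := f ∘ₗ (LinearMap.mulLeft k (rx.right m)) ∘ₗ S with hφm
    set ψm : K →ₗ[k] K := (LinearMap.mulLeft k (rx.left m)) ∘ₗ S with hψm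
    set Ωm : K ⊗[k] (K ⊗[k] K) →ₗ[k] K :=
      LinearMap.mul' k K ∘ₗ (TensorProduct.lid k (K ⊗[k] K)).toLinearMap ∘ₗ
        TensorProduct.map φm (TensorProduct.map ψm LinearMap.id) with hΩm
    have Ωm_tmul : ∀ α β γ : K, Ωm (α ⊗ₜ[k] (β ⊗ₜ[k] γ)) = φm α • (ψm β * γ) := by
      intro α β γ
      simp [hΩm]
    have key := sum_tmul_tmul_eq (R := k) rh rl rr
    have key2 := congrArg Ωm key
    simp only [map_sum, Ωm_tmul] at key2
    calc ∑ i ∈ rh.index, ∑ j ∈ (rl i).index,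
          f (rx.right m * S ((rl i).left j)) •
            (rx.left m * S ((rl i).right j) * rh.right i)
        = ∑ i ∈ rh.index, ∑ j ∈ (rl i).index,
            φm ((rl i).left j) • (ψm ((rl i).right j) * rh.right i) := by
          refine Finset.sum_congr rfl fun i _ => Finset.sum_congr rfl fun j _ => ?_
          simp [hφm, hψm]
      _ = ∑ i ∈ rh.index, ∑ t ∈ (rr i).index,
            φm (rh.left i) • (ψm ((rr i).left t) * (rr i).right t) := key2
      _ = ∑ i ∈ rh.index,
            Coalgebra.counit (R := k) (rh.right i) • (φm (rh.left i) • rx.left m) := by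
          refine Finset.sum_congr rfl fun i _ => ?_
          rw [← Finset.smul_sum]
          have hcol : ∑ t ∈ (rr i).index, ψm ((rr i).left t) * (rr i).right t
              = Coalgebra.counit (R := k) (rh.right i) • rx.left m := by
            calc ∑ t ∈ (rr i).index, ψm ((rr i).left t) * (rr i).right t
                = rx.left m * ∑ t ∈ (rr i).index,
                    S ((rr i).left t) * (rr i).right t := by
                  rw [Finset.mul_sum]
                  refine Finset.sum_congr rfl fun t _ => ?_
                  simp [hψm, mul_assoc]
              _ = Coalgebra.counit (R := k) (rh.right i) • rx.left m := by
                  rw [HopfAlgebra.sum_antipode_mul_eq_smul (R := k) (rr i),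
                    mul_smul_comm, mul_one]
          rw [hcol, smul_comm]
      _ = f (rx.right m * S h) • rx.left m := by
          have hc := sum_smul_counit (k := k) (LinearMap.smulRight φm (rx.left m)) rh
          simp only [LinearMap.smulRight_apply] at hc
          rw [hc]
          simp [hφm]
  rw [Finset.sum_congr rfl step, Fmap_repr (actMap h f) rx]
  rfl

/-- Module-comodule compatibility at the level of `coactL` (`S5`). -/
lemma coactL_act (f : Vk) (h : K) {ι : Type*} (rh : Coalgebra.Repr k h ι) :
    coactL (actMap h f)
      = ∑ i ∈ rh.index, (TensorProduct.map (actMap (rh.left i))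
          (LinearMap.mulRight k (rh.right i))) (coactL f) := by
  apply evW_inj K
  intro x
  have evmap : ∀ (a c : K) (t : Vk ⊗[k] K),
      evW K x ((TensorProduct.map (actMap a) (LinearMap.mulRight k c)) t)
        = evW K (x * S a) t * c := by
    intro a c t
    induction t using TensorProduct.induction_on with
    | zero => simp
    | tmul g y =>
        rw [TensorProduct.map_tmul, evW_tmul, evW_tmul, actMap_apply,
          LinearMap.mulRight_apply, smul_mul_assoc]
    | add u v hu hv => simp only [map_add, LinearMap.add_apply, hu, hv, add_mul]
  rw [evW_coactL, map_sum]
  rw [Finset.sum_congr rfl fun i _ => evmap (rh.left i) (rh.right i) (coactL f)]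
  rw [Finset.sum_congr rfl fun i _ => by rw [evW_coactL]]
  exact Fmap_act f h x rh

/-- Four-fold coassociativity rearrangement (`S11`). -/
lemma S11 (f : Vk)
    (r1 : ∀ i j : Fin (Module.finrank k K), Coalgebra.Repr k (Fmap ((bb).coord i) (bb j)) (K × K))
    (r2 : ∀ i : Fin (Module.finrank k K), Coalgebra.Repr k (Fmap f (bb i)) (K × K)) :
    ∑ i : Fin (Module.finrank k K), ∑ j : Fin (Module.finrank k K), ∑ s ∈ (r1 i j).index,
      ((bb).coord j) ⊗ₜ[k] ((r1 i j).left s ⊗ₜ[k] ((r1 i j).right s ⊗ₜ[k] Fmap f (bb i)))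
    = ∑ i : Fin (Module.finrank k K), ∑ j : Fin (Module.finrank k K), ∑ t ∈ (r2 i).index,
      ((bb).coord j) ⊗ₜ[k]
        ((Fmap ((bb).coord i) (bb j)) ⊗ₜ[k] ((r2 i).left t ⊗ₜ[k] (r2 i).right t)) := by
  apply evW_inj (K ⊗[k] (K ⊗[k] K))
  intro x
  simp only [map_sum, evW_tmul]
  set asc : (K ⊗[k] K) ⊗[k] K →ₗ[k] K ⊗[k] (K ⊗[k] K) :=
    (TensorProduct.assoc k K K K).toLinearMap with hasc
  have asc_tmul : ∀ (α β γ : K), asc ((α ⊗ₜ[k] β) ⊗ₜ[k] γ) = α ⊗ₜ[k] (β ⊗ₜ[k] γ) := by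
    intro α β γ; simp [hasc]
  have lhs : ∀ i : Fin (Module.finrank k K),
      ∑ j : Fin (Module.finrank k K), ∑ s ∈ (r1 i j).index,
        ((bb).coord j x) • ((r1 i j).left s ⊗ₜ[k] ((r1 i j).right s ⊗ₜ[k] Fmap f (bb i)))
      = asc ((Coalgebra.comul (R := k) (Fmap ((bb).coord i) x)) ⊗ₜ[k] (Fmap f (bb i))) := by
    intro i
    have inner : ∀ j, ∑ s ∈ (r1 i j).index,
        ((r1 i j).left s ⊗ₜ[k] ((r1 i j).right s ⊗ₜ[k] Fmap f (bb i)))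
        = asc ((Coalgebra.comul (R := k) (Fmap ((bb).coord i) (bb j))) ⊗ₜ[k] (Fmap f (bb i))) := by
      intro j
      rw [← (r1 i j).eq, TensorProduct.sum_tmul, map_sum]
      exact Finset.sum_congr rfl fun s _ => (asc_tmul _ _ _).symm
    calc ∑ j : Fin (Module.finrank k K), ∑ s ∈ (r1 i j).index,
          ((bb).coord j x) • ((r1 i j).left s ⊗ₜ[k] ((r1 i j).right s ⊗ₜ[k] Fmap f (bb i)))
        = ∑ j : Fin (Module.finrank k K), ((bb).coord j x) •
            asc ((Coalgebra.comul (R := k) (Fmap ((bb).coord i) (bb j))) ⊗ₜ[k] (Fmap f (bb i))) := by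
          refine Finset.sum_congr rfl fun j _ => ?_
          rw [← inner j, Finset.smul_sum]
      _ = asc ((∑ j : Fin (Module.finrank k K), ((bb).coord j x) •
            Coalgebra.comul (R := k) (Fmap ((bb).coord i) (bb j))) ⊗ₜ[k] (Fmap f (bb i))) := by
          rw [TensorProduct.sum_tmul, map_sum]
          refine Finset.sum_congr rfl fun j _ => ?_
          rw [← TensorProduct.smul_tmul', map_smul]
      _ = asc ((Coalgebra.comul (R := k) (Fmap ((bb).coord i) x)) ⊗ₜ[k] (Fmap f (bb i))) := by
          congr 2
          calc ∑ j : Fin (Module.finrank k K), ((bb).coord j x) •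
                Coalgebra.comul (R := k) (Fmap ((bb).coord i) (bb j))
              = Coalgebra.comul (R := k) (∑ j : Fin (Module.finrank k K),
                  ((bb).coord j x) • Fmap ((bb).coord i) (bb j)) := by
                rw [map_sum]
                exact Finset.sum_congr rfl fun j _ => (map_smul _ _ _).symm
            _ = Coalgebra.comul (R := k) (Fmap ((bb).coord i) x) := by
                rw [smul_Fmap_basis]
  have rhs : ∀ i : Fin (Module.finrank k K),
      ∑ j : Fin (Module.finrank k K), ∑ t ∈ (r2 i).index,
        ((bb).coord j x) •
          ((Fmap ((bb).coord i) (bb j)) ⊗ₜ[k] ((r2 i).left t ⊗ₜ[k] (r2 i).right t))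
      = (Fmap ((bb).coord i) x) ⊗ₜ[k] (Coalgebra.comul (R := k) (Fmap f (bb i))) := by
    intro i
    calc ∑ j : Fin (Module.finrank k K), ∑ t ∈ (r2 i).index,
          ((bb).coord j x) •
            ((Fmap ((bb).coord i) (bb j)) ⊗ₜ[k] ((r2 i).left t ⊗ₜ[k] (r2 i).right t))
        = ∑ j : Fin (Module.finrank k K), ((bb).coord j x) •
            ((Fmap ((bb).coord i) (bb j)) ⊗ₜ[k] (Coalgebra.comul (R := k) (Fmap f (bb i)))) := by
          refine Finset.sum_congr rfl fun j _ => ?_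
          rw [← Finset.smul_sum, ← TensorProduct.tmul_sum, (r2 i).eq]
      _ = (Fmap ((bb).coord i) x) ⊗ₜ[k] (Coalgebra.comul (R := k) (Fmap f (bb i))) := by
          rw [← smul_Fmap_basis ((bb).coord i) x, TensorProduct.sum_tmul]
          exact Finset.sum_congr rfl fun j _ => by rw [TensorProduct.smul_tmul']
  rw [Finset.sum_congr rfl fun i _ => lhs i, Finset.sum_congr rfl fun i _ => rhs i]
  -- both sides are images of `B1` under coassociativity
  have hL : ∑ i : Fin (Module.finrank k K), asc
        ((Coalgebra.comul (R := k) (Fmap ((bb).coord i) x)) ⊗ₜ[k] (Fmap f (bb i)))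
      = asc ((Coalgebra.comul (R := k)).rTensor K
            (Coalgebra.comul (R := k) (Fmap f x))) := by
    rw [← B1 f x, map_sum, map_sum]
    exact Finset.sum_congr rfl fun i _ => by rw [LinearMap.rTensor_tmul]
  have hR : ∑ i : Fin (Module.finrank k K),
        (Fmap ((bb).coord i) x) ⊗ₜ[k] (Coalgebra.comul (R := k) (Fmap f (bb i)))
      = (Coalgebra.comul (R := k)).lTensor K
          (Coalgebra.comul (R := k) (Fmap f x)) := by
    rw [← B1 f x, map_sum]
    exact Finset.sum_congr rfl fun i _ => by rw [LinearMap.lTensor_tmul]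
  rw [hL, hR]
  exact Coalgebra.coassoc_apply _

/-- The projection `P f = ∑ f₀ ↼ S(f₁)`. -/
noncomputable def PL : Vk →ₗ[k] Vk := muMap ∘ₗ coactL

lemma PL_apply (f : Vk) :
    PL f = ∑ i : Fin (Module.finrank k K),
      actMap (S (Fmap f (bb i))) ((bb).coord i) := by
  rw [PL, LinearMap.comp_apply, coactL_apply, map_sum]
  exact Finset.sum_congr rfl fun i _ => muMap_tmul _ _

/-- `actMap` bundled as a linear map in the `K`-variable. -/
noncomputable def actB : K →ₗ[k] ((Vk) →ₗ[k] (Vk)) where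
  toFun := actMap
  map_add' h h' := LinearMap.ext fun g => actMap_addh h h' g
  map_smul' c h := LinearMap.ext fun g => actMap_smulh c h g

/-- `G1`: the projection lands in the coinvariants. -/
lemma coactL_PL (f : Vk) : coactL (PL f) = (PL f) ⊗ₜ[k] 1 := by
  classical
  have r2 : ∀ i : Fin (Module.finrank k K), Coalgebra.Repr k (Fmap f (bb i)) (K × K) :=
    fun i => ℛ k (Fmap f (bb i))
  have r1 : ∀ i j : Fin (Module.finrank k K),
      Coalgebra.Repr k (Fmap ((bb).coord i) (bb j)) (K × K) :=
    fun i j => ℛ k (Fmap ((bb).coord i) (bb j))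
  set nud : K ⊗[k] K →ₗ[k] K := LinearMap.mul' k K ∘ₗ LinearMap.lTensor K S with hnud
  set Sh : (Vk ⊗[k] (K ⊗[k] (K ⊗[k] K))) →ₗ[k] ((Vk ⊗[k] K) ⊗[k] (K ⊗[k] K)) :=
    (TensorProduct.assoc k (Vk) K (K ⊗[k] K)).symm.toLinearMap ∘ₗ
      LinearMap.lTensor (Vk) ((TensorProduct.comm k (K ⊗[k] K) K).toLinearMap ∘ₗ
        (TensorProduct.assoc k K K K).symm.toLinearMap) with hSh
  set Φbig : (Vk ⊗[k] (K ⊗[k] (K ⊗[k] K))) →ₗ[k] (Vk ⊗[k] K) :=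
    (TensorProduct.map muMap nud) ∘ₗ Sh with hΦ
  have Φ_tmul : ∀ (g : Vk) (α β γ : K),
      Φbig (g ⊗ₜ[k] (α ⊗ₜ[k] (β ⊗ₜ[k] γ)))
        = (actMap (S γ) g) ⊗ₜ[k] (α * S β) := by
    intro g α β γ
    simp only [hΦ, hSh, LinearMap.comp_apply, LinearMap.lTensor_tmul,
      LinearEquiv.coe_coe, TensorProduct.assoc_symm_tmul, TensorProduct.comm_tmul,
      TensorProduct.map_tmul, muMap_tmul, hnud, LinearMap.lTensor_tmul,
      LinearMap.mul'_apply]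
  have expand : coactL (PL f)
      = ∑ i : Fin (Module.finrank k K), ∑ j : Fin (Module.finrank k K),
          ∑ t ∈ (r2 i).index,
            Φbig (((bb).coord j) ⊗ₜ[k] ((Fmap ((bb).coord i) (bb j)) ⊗ₜ[k]
              ((r2 i).left t ⊗ₜ[k] (r2 i).right t))) := by
    rw [PL_apply, map_sum]
    refine Finset.sum_congr rfl fun i _ => ?_
    have h1 : coactL (actMap (S (Fmap f (bb i))) ((bb).coord i))
        = ∑ t ∈ (r2 i).index,
            (TensorProduct.map (actMap (S ((r2 i).right t)))
              (LinearMap.mulRight k (S ((r2 i).left t)))) (coactL ((bb).coord i)) :=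
      coactL_act ((bb).coord i) (S (Fmap f (bb i))) (antipodeRepr (r2 i))
    rw [h1]
    have h2 : ∀ t ∈ (r2 i).index,
        (TensorProduct.map (actMap (S ((r2 i).right t)))
          (LinearMap.mulRight k (S ((r2 i).left t)))) (coactL ((bb).coord i))
        = ∑ j : Fin (Module.finrank k K),
            Φbig (((bb).coord j) ⊗ₜ[k] ((Fmap ((bb).coord i) (bb j)) ⊗ₜ[k]
              ((r2 i).left t ⊗ₜ[k] (r2 i).right t))) := by
      intro t _
      rw [coactL_apply, map_sum]
      refine Finset.sum_congr rfl fun j _ => ?_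
      rw [TensorProduct.map_tmul, Φ_tmul]
      rfl
    exact (Finset.sum_congr rfl h2).trans Finset.sum_comm
  rw [expand]
  have S11' := S11 f r1 r2
  have lhsimg := congrArg Φbig S11'
  simp only [map_sum] at lhsimg
  rw [← lhsimg]
  -- now compute the left-hand image
  calc ∑ i : Fin (Module.finrank k K), ∑ j : Fin (Module.finrank k K),
        ∑ s ∈ (r1 i j).index,
          Φbig (((bb).coord j) ⊗ₜ[k] ((r1 i j).left s ⊗ₜ[k]
            ((r1 i j).right s ⊗ₜ[k] Fmap f (bb i))))
      = ∑ i : Fin (Module.finrank k K), ∑ j : Fin (Module.finrank k K),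
          Coalgebra.counit (R := k) (Fmap ((bb).coord i) (bb j)) •
            ((actMap (S (Fmap f (bb i))) ((bb).coord j)) ⊗ₜ[k] (1 : K)) := by
        refine Finset.sum_congr rfl fun i _ => Finset.sum_congr rfl fun j _ => ?_
        calc ∑ s ∈ (r1 i j).index,
              Φbig (((bb).coord j) ⊗ₜ[k] ((r1 i j).left s ⊗ₜ[k]
                ((r1 i j).right s ⊗ₜ[k] Fmap f (bb i))))
            = (actMap (S (Fmap f (bb i))) ((bb).coord j)) ⊗ₜ[k]
                (∑ s ∈ (r1 i j).index, (r1 i j).left s * S ((r1 i j).right s)) := by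
              rw [TensorProduct.tmul_sum]
              exact Finset.sum_congr rfl fun s _ => Φ_tmul _ _ _ _
          _ = Coalgebra.counit (R := k) (Fmap ((bb).coord i) (bb j)) •
                ((actMap (S (Fmap f (bb i))) ((bb).coord j)) ⊗ₜ[k] (1 : K)) := by
              rw [HopfAlgebra.sum_mul_antipode_eq_smul (R := k) (r1 i j),
                TensorProduct.tmul_smul]
    _ = (PL f) ⊗ₜ[k] (1 : K) := by
        have hdelta : ∀ i j : Fin (Module.finrank k K),
            Coalgebra.counit (R := k) (Fmap ((bb).coord i) (bb j))
              = if j = i then (1 : k) else 0 := by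
          intro i j
          rw [counit_Fmap, Module.Basis.coord_apply, Module.Basis.repr_self, Finsupp.single_apply]
        calc ∑ i : Fin (Module.finrank k K), ∑ j : Fin (Module.finrank k K),
              Coalgebra.counit (R := k) (Fmap ((bb).coord i) (bb j)) •
                ((actMap (S (Fmap f (bb i))) ((bb).coord j)) ⊗ₜ[k] (1 : K))
            = ∑ i : Fin (Module.finrank k K), ∑ j : Fin (Module.finrank k K),
              (if j = i then ((actMap (S (Fmap f (bb i))) ((bb).coord j)) ⊗ₜ[k] (1 : K))
                else 0) := by
              refine Finset.sum_congr rfl fun i _ => Finset.sum_congr rfl fun j _ => ?_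
              rw [hdelta i j]
              split <;> simp
          _ = ∑ i : Fin (Module.finrank k K),
                (actMap (S (Fmap f (bb i))) ((bb).coord i)) ⊗ₜ[k] (1 : K) := by
              refine Finset.sum_congr rfl fun i _ => ?_
              rw [Finset.sum_ite_eq' Finset.univ i
                (fun j => (actMap (S (Fmap f (bb i))) ((bb).coord j)) ⊗ₜ[k] (1 : K))]
              simp
          _ = (PL f) ⊗ₜ[k] (1 : K) := by
              rw [PL_apply, TensorProduct.sum_tmul]

/-- `G2`: reconstruction of every functional from projections. -/
lemma reconstruction (f : Vk) :
    ∑ j : Fin (Module.finrank k K), actMap (Fmap f (bb j)) (PL ((bb).coord j)) = f := by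
  classical
  have expand : ∀ j, actMap (Fmap f (bb j)) (PL ((bb).coord j))
      = ∑ i : Fin (Module.finrank k K),
          actMap (S (Fmap ((bb).coord j) (bb i)) * Fmap f (bb j)) ((bb).coord i) := by
    intro j
    rw [PL_apply, map_sum]
    exact Finset.sum_congr rfl fun i _ => actMap_comp _ _ _
  rw [Finset.sum_congr rfl fun j _ => expand j, Finset.sum_comm]
  have inner : ∀ i : Fin (Module.finrank k K),
      ∑ j : Fin (Module.finrank k K),
        actMap (S (Fmap ((bb).coord j) (bb i)) * Fmap f (bb j)) ((bb).coord i)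
      = f (bb i) • (bb).coord i := by
    intro i
    have hsum : ∑ j : Fin (Module.finrank k K),
        S (Fmap ((bb).coord j) (bb i)) * Fmap f (bb j) = f (bb i) • (1 : K) := by
      have hb := congrArg (LinearMap.mul' k K ∘ₗ
        LinearMap.rTensor K (HopfAlgebra.antipode (R := k))) (B1 f (bb i))
      simp only [map_sum, LinearMap.comp_apply, LinearMap.rTensor_tmul,
        LinearMap.mul'_apply] at hb
      rw [hb]
      have := HopfAlgebra.mul_antipode_rTensor_comul_apply (R := k)
        (A := K) (Fmap f (bb i))
      rw [this, counit_Fmap, Algebra.smul_def, mul_one]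
    calc ∑ j : Fin (Module.finrank k K),
          actMap (S (Fmap ((bb).coord j) (bb i)) * Fmap f (bb j)) ((bb).coord i)
        = actB (∑ j : Fin (Module.finrank k K),
            S (Fmap ((bb).coord j) (bb i)) * Fmap f (bb j)) ((bb).coord i) := by
          rw [map_sum, LinearMap.sum_apply]
          rfl
      _ = f (bb i) • (bb).coord i := by
          rw [hsum]
          show actMap (f (bb i) • (1 : K)) ((bb).coord i) = _
          rw [actMap_smulh, actMap_one]
  rw [Finset.sum_congr rfl fun i _ => inner i]
  exact dual_expansion f

/-- `G3`: the projection intertwines the action with the counit. -/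
lemma PL_act (h : K) (g : Vk) :
    PL (actMap h g) = Coalgebra.counit (R := k) h • PL g := by
  have rh := ℛ k h
  have muexp : ∀ (a c : K), muMap ((TensorProduct.map (actMap a)
      (LinearMap.mulRight k c)) (coactL g))
      = ∑ m : Fin (Module.finrank k K),
          actMap (a * (S c * S (Fmap g (bb m)))) ((bb).coord m) := by
    intro a c
    rw [coactL_apply, map_sum, map_sum]
    refine Finset.sum_congr rfl fun m _ => ?_
    rw [TensorProduct.map_tmul, muMap_tmul, actMap_comp, LinearMap.mulRight_apply,
      antipode_mul]
  rw [show PL (actMap h g) = muMap (coactL (actMap h g)) from rfl,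
    coactL_act g h rh, map_sum,
    Finset.sum_congr rfl fun t _ => muexp (rh.left t) (rh.right t),
    Finset.sum_comm]
  have inner : ∀ m : Fin (Module.finrank k K),
      ∑ t ∈ rh.index, actMap (rh.left t * (S (rh.right t) * S (Fmap g (bb m))))
        ((bb).coord m)
      = Coalgebra.counit (R := k) h • actMap (S (Fmap g (bb m))) ((bb).coord m) := by
    intro m
    have hsum : ∑ t ∈ rh.index, rh.left t * (S (rh.right t) * S (Fmap g (bb m)))
        = Coalgebra.counit (R := k) h • S (Fmap g (bb m)) := by
      calc ∑ t ∈ rh.index, rh.left t * (S (rh.right t) * S (Fmap g (bb m)))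
          = (∑ t ∈ rh.index, rh.left t * S (rh.right t)) * S (Fmap g (bb m)) := by
            rw [Finset.sum_mul]
            exact Finset.sum_congr rfl fun t _ => (mul_assoc _ _ _).symm
        _ = Coalgebra.counit (R := k) h • S (Fmap g (bb m)) := by
            rw [HopfAlgebra.sum_mul_antipode_eq_smul (R := k) rh, smul_mul_assoc,
              one_mul]
    calc ∑ t ∈ rh.index, actMap (rh.left t * (S (rh.right t) * S (Fmap g (bb m))))
          ((bb).coord m)
        = actB (∑ t ∈ rh.index, rh.left t * (S (rh.right t) * S (Fmap g (bb m))))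
            ((bb).coord m) := by
          rw [map_sum, LinearMap.sum_apply]
          rfl
      _ = Coalgebra.counit (R := k) h • actMap (S (Fmap g (bb m))) ((bb).coord m) := by
          rw [hsum]
          show actMap (Coalgebra.counit (R := k) h • S (Fmap g (bb m))) ((bb).coord m) = _
          rw [actMap_smulh]
  rw [Finset.sum_congr rfl fun m _ => inner m, ← Finset.smul_sum, PL_apply]

/-- `G4`. -/
lemma PL_of_coinv {l : Vk} (hl : coactL l = l ⊗ₜ[k] 1) : PL l = l := by
  rw [show PL l = muMap (coactL l) from rfl, hl, muMap_tmul, antipode_one', actMap_one]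

/-- `G5`: freeness over a coinvariant. -/
lemma psi_act {l : Vk} (hl : coactL l = l ⊗ₜ[k] 1) (h : K) :
    (LinearMap.rTensor K PL) (coactL (actMap h l)) = l ⊗ₜ[k] h := by
  have rh := ℛ k h
  rw [coactL_act l h rh, map_sum]
  calc ∑ t ∈ rh.index, (LinearMap.rTensor K PL)
        ((TensorProduct.map (actMap (rh.left t)) (LinearMap.mulRight k (rh.right t)))
          (coactL l))
      = ∑ t ∈ rh.index, Coalgebra.counit (R := k) (rh.left t) •
          ((PL l) ⊗ₜ[k] (rh.right t)) := by
        refine Finset.sum_congr rfl fun t _ => ?_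
        rw [hl, TensorProduct.map_tmul, LinearMap.rTensor_tmul, PL_act,
          LinearMap.mulRight_apply, one_mul, TensorProduct.smul_tmul']
    _ = (PL l) ⊗ₜ[k] h := by
        have := sum_counit_smul (k := k) (B' := Vk ⊗[k] K)
          ((TensorProduct.mk k (Vk) K) (PL l)) rh
        simpa using this
    _ = l ⊗ₜ[k] h := by rw [PL_of_coinv hl]

/-- Larson–Sweedler: a finite-dimensional Hopf algebra is Frobenius. -/
theorem frobenius_exists [Nontrivial K] :
    ∃ lam : K →ₗ[k] k,
      Function.Bijective (fun h : K => lam ∘ₗ LinearMap.mulRight k h) ∧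
      Function.Bijective (fun h : K => lam ∘ₗ LinearMap.mulLeft k h) := by
  classical
  -- find a nonzero coinvariant
  have hexists : ∃ g : Vk, PL g ≠ 0 := by
    by_contra hno
    push_neg at hno
    have hz : ∀ f : Vk, f = 0 := by
      intro f
      have hr := reconstruction (k := k) (K := K) f
      rw [Finset.sum_congr rfl fun j _ => by rw [hno ((bb).coord j)]] at hr
      simpa using hr.symm
    have h0 : (Coalgebra.counit (R := k) : K →ₗ[k] k) = 0 := hz _
    have h1 := congrArg (fun φ : K →ₗ[k] k => φ 1) h0
    simp only [LinearMap.zero_apply] at h1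
    rw [show Coalgebra.counit (R := k) (1 : K) = 1 from
      map_one (Bialgebra.counitAlgHom k K)] at h1
    exact one_ne_zero h1
  obtain ⟨g, hg⟩ := hexists
  set l : Vk := PL g with hldef
  have hco : coactL l = l ⊗ₜ[k] 1 := coactL_PL g
  obtain ⟨x0, hx0⟩ : ∃ x, l x ≠ 0 := by
    by_contra hc
    push_neg at hc
    exact hg (LinearMap.ext fun x => hc x)
  have hactinj : Function.Injective (fun h : K => actMap h l) := by
    intro h h' hh
    have e1 := psi_act hco h
    have e2 := psi_act hco h'
    simp only at hh
    rw [hh] at e1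
    have : l ⊗ₜ[k] h = l ⊗ₜ[k] h' := e1.symm.trans e2
    have := congrArg (evW K x0) this
    rw [evW_tmul, evW_tmul] at this
    exact smul_right_injective K hx0 this
  set PhiL : K →ₗ[k] Vk :=
    { toFun := fun h => l ∘ₗ LinearMap.mulRight k h
      map_add' := fun h h' => LinearMap.ext fun x => by
        simp [LinearMap.mulRight_apply, mul_add]
      map_smul' := fun c h => LinearMap.ext fun x => by
        simp [LinearMap.mulRight_apply, mul_smul_comm] } with hPhiL
  have hcomp : ∀ h : K, actMap h l = PhiL (S h) := fun h => rfl
  have hSinj : Function.Injective (S : K →ₗ[k] K) := by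
    intro h h' hh
    exact hactinj (by simp only; rw [hcomp, hcomp, hh])
  have hSsurj : Function.Surjective (S : K →ₗ[k] K) :=
    LinearMap.surjective_of_injective hSinj
  have hPhiinj : Function.Injective PhiL := by
    intro y y' hyy
    obtain ⟨h, rfl⟩ := hSsurj y
    obtain ⟨h', rfl⟩ := hSsurj y'
    exact congrArg S (hactinj (by simp only; rw [hcomp, hcomp, hyy]))
  have hPhibij : Function.Bijective PhiL := by
    refine ⟨hPhiinj, ?_⟩
    have hfr : Module.finrank k K = Module.finrank k (Vk) :=
      (Subspace.dual_finrank_eq (V := K) (K := k)).symm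
    exact (LinearMap.injective_iff_surjective_of_finrank_eq_finrank hfr).mp hPhiinj
  refine ⟨l, hPhibij, ?_⟩
  -- the other-side map is the dual of `PhiL` composed with evaluation
  set e : K ≃ₗ[k] Vk := LinearEquiv.ofBijective PhiL hPhibij with he
  have hfun : (fun h : K => l ∘ₗ LinearMap.mulLeft k h)
      = (e.dualMap : Module.Dual k (Vk) →ₗ[k] Module.Dual k K) ∘
        (Module.evalEquiv k K) := by
    funext h
    ext y
    show l (h * y) = (Module.evalEquiv k K h) (e y)
    rw [Module.evalEquiv_apply]
    rfl
  rw [hfun]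
  exact (e.dualMap.bijective).comp (Module.evalEquiv k K).bijective

end Core

section Integrals
variable {K : Type*} [Ring K] [HopfAlgebra k K] [FiniteDimensional k K] [Nontrivial K]

theorem integral_package :
    (∃ Λ : K, Λ ≠ 0 ∧ IsLeftIntegral k Λ) ∧
    (∃ Λ : K, Λ ≠ 0 ∧ IsRightIntegral k Λ) ∧
    (∀ Λ₀ Λ : K, Λ₀ ≠ 0 → IsLeftIntegral k Λ₀ → IsLeftIntegral k Λ →
      ∃ c : k, Λ = c • Λ₀) ∧
    (∀ Λ₀ Λ : K, Λ₀ ≠ 0 → IsRightIntegral k Λ₀ → IsRightIntegral k Λ →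
      ∃ c : k, Λ = c • Λ₀) := by
  obtain ⟨lam, hPhi, hPsi⟩ := frobenius_exists (k := k) (K := K)
  set Φ : K → (K →ₗ[k] k) := fun h => lam ∘ₗ LinearMap.mulRight k h with hΦdef
  set Ψ : K → (K →ₗ[k] k) := fun h => lam ∘ₗ LinearMap.mulLeft k h with hΨdef
  have hΦ_apply : ∀ h x : K, Φ h x = lam (x * h) := fun h x => rfl
  have hΨ_apply : ∀ h x : K, Ψ h x = lam (h * x) := fun h x => rfl
  have hΦ0 : Φ 0 = 0 := by ext x; simp [hΦ_apply]
  have hΨ0 : Ψ 0 = 0 := by ext x; simp [hΨ_apply]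
  have hΦsmul : ∀ (c : k) (h : K), Φ (c • h) = c • Φ h := by
    intro c h; ext x; simp [hΦ_apply, mul_smul_comm]
  have hΨsmul : ∀ (c : k) (h : K), Ψ (c • h) = c • Ψ h := by
    intro c h; ext x; simp [hΨ_apply, smul_mul_assoc]
  have hcount1 : Coalgebra.counit (R := k) (1 : K) = 1 :=
    map_one (Bialgebra.counitAlgHom k K)
  -- the value of Φ on a left integral
  have hΦint : ∀ Λ : K, IsLeftIntegral k Λ → Φ Λ = lam Λ • Coalgebra.counit (R := k) := by
    intro Λ hΛ
    ext x
    rw [hΦ_apply, hΛ x, map_smul]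
    simp [mul_comm]
  have hΨint : ∀ Λ : K, IsRightIntegral k Λ → Ψ Λ = lam Λ • Coalgebra.counit (R := k) := by
    intro Λ hΛ
    ext x
    rw [hΨ_apply, hΛ x, map_smul]
    simp [mul_comm]
  have hcounit_ne : (Coalgebra.counit (R := k) : K →ₗ[k] k) ≠ 0 := by
    intro h0
    have := congrArg (fun φ : K →ₗ[k] k => φ 1) h0
    simp only [LinearMap.zero_apply] at this
    rw [hcount1] at this
    exact one_ne_zero this
  refine ⟨?_, ?_, ?_, ?_⟩
  · -- left integral existence
    obtain ⟨Λ, hΛ⟩ := hPhi.2 (Coalgebra.counit (R := k))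
    refine ⟨Λ, ?_, ?_⟩
    · intro h0
      rw [h0, hΦ0] at hΛ
      exact hcounit_ne hΛ.symm
    · intro y
      apply hPhi.1
      show Φ (y * Λ) = Φ (Coalgebra.counit (R := k) y • Λ)
      rw [hΦsmul]
      ext x
      calc Φ (y * Λ) x = Φ Λ (x * y) := by rw [hΦ_apply, hΦ_apply, ← mul_assoc]
        _ = Coalgebra.counit (R := k) x * Coalgebra.counit (R := k) y := by
            rw [hΛ, Bialgebra.counit_mul]
        _ = (Coalgebra.counit (R := k) y • Φ Λ) x := by
            rw [hΛ]
            simp [mul_comm]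
  · -- right integral existence
    obtain ⟨Λ, hΛ⟩ := hPsi.2 (Coalgebra.counit (R := k))
    refine ⟨Λ, ?_, ?_⟩
    · intro h0
      rw [h0, hΨ0] at hΛ
      exact hcounit_ne hΛ.symm
    · intro y
      apply hPsi.1
      show Ψ (Λ * y) = Ψ (Coalgebra.counit (R := k) y • Λ)
      rw [hΨsmul]
      ext x
      calc Ψ (Λ * y) x = Ψ Λ (y * x) := by rw [hΨ_apply, hΨ_apply, mul_assoc]
        _ = Coalgebra.counit (R := k) y * Coalgebra.counit (R := k) x := by
            rw [hΛ, Bialgebra.counit_mul]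
        _ = (Coalgebra.counit (R := k) y • Ψ Λ) x := by
            rw [hΛ]
            simp
  · -- left uniqueness
    intro Λ₀ Λ h0 hi0 hi
    have hne : lam Λ₀ ≠ 0 := by
      intro hz
      have := hΦint Λ₀ hi0
      rw [hz, zero_smul] at this
      exact h0 (hPhi.1 (this.trans hΦ0.symm))
    refine ⟨lam Λ * (lam Λ₀)⁻¹, hPhi.1 ?_⟩
    show Φ Λ = Φ ((lam Λ * (lam Λ₀)⁻¹) • Λ₀)
    rw [hΦsmul, hΦint Λ hi, hΦint Λ₀ hi0, smul_smul, mul_assoc,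
      inv_mul_cancel₀ hne, mul_one]
  · -- right uniqueness
    intro Λ₀ Λ h0 hi0 hi
    have hne : lam Λ₀ ≠ 0 := by
      intro hz
      have := hΨint Λ₀ hi0
      rw [hz, zero_smul] at this
      exact h0 (hPsi.1 (this.trans hΨ0.symm))
    refine ⟨lam Λ * (lam Λ₀)⁻¹, hPsi.1 ?_⟩
    show Ψ Λ = Ψ ((lam Λ * (lam Λ₀)⁻¹) • Λ₀)
    rw [hΨsmul, hΨint Λ hi, hΨint Λ₀ hi0, smul_smul, mul_assoc,
      inv_mul_cancel₀ hne, mul_one]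

end Integrals

end LSAux

/-- Let `D = A ⊗ H` carry a double cross product Hopf algebra structure of
finite-dimensional Hopf algebras `A` and `H` (the algebra structure of `D` restricts to
that of `A` on `A ⊗ 1` and of `H` on `1 ⊗ H`, with `(a ⊗ 1)(a' ⊗ h) = aa' ⊗ h`,
`(a ⊗ h)(1 ⊗ h') = a ⊗ hh'`, and `ε_D = ε_A ⊗ ε_H`).  Then there are `u ∈ H`, `v ∈ A`
such that `Λ_A^l ⊗ u` is a nonzero left integral of `D` and `v ⊗ Λ_H^r` is a nonzero
right integral of `D`; moreover every left (resp. right) integral of `D` has the form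
`Λ_A^l ⊗ u` (resp. `v ⊗ Λ_H^r`). -/
theorem integrals_of_double_cross_product (k A H D : Type*) [Field k]
    [Ring A] [HopfAlgebra k A] [Ring H] [HopfAlgebra k H] [Ring D] [HopfAlgebra k D]
    [FiniteDimensional k A] [FiniteDimensional k H] [FiniteDimensional k D]
    (f : (A ⊗[k] H) ≃ₗ[k] D)
    (hone : f (1 ⊗ₜ 1) = 1)
    (hmulA : ∀ (a a' : A) (h : H), f (a ⊗ₜ 1) * f (a' ⊗ₜ h) = f ((a * a') ⊗ₜ h))
    (hmulH : ∀ (a : A) (h h' : H), f (a ⊗ₜ h) * f (1 ⊗ₜ h') = f (a ⊗ₜ (h * h')))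
    (hcounit : ∀ x : A ⊗[k] H,
      Coalgebra.counit (R := k) (f x) = Coalgebra.counit (R := k) x)
    (ΛA : A) (hΛA : IsLeftIntegral k ΛA) (hΛA0 : ΛA ≠ 0)
    (ΛH : H) (hΛH : IsRightIntegral k ΛH) (hΛH0 : ΛH ≠ 0) :
    (∃ u : H, f (ΛA ⊗ₜ u) ≠ 0 ∧ IsLeftIntegral k (f (ΛA ⊗ₜ u))) ∧
    (∃ v : A, f (v ⊗ₜ ΛH) ≠ 0 ∧ IsRightIntegral k (f (v ⊗ₜ ΛH))) ∧
    (∀ Λ : D, IsLeftIntegral k Λ → ∃ u : H, Λ = f (ΛA ⊗ₜ u)) ∧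
    (∀ Λ : D, IsRightIntegral k Λ → ∃ v : A, Λ = f (v ⊗ₜ ΛH)) := by
  classical
  haveI : Nontrivial A := ⟨⟨ΛA, 0, hΛA0⟩⟩
  haveI : Nontrivial H := ⟨⟨ΛH, 0, hΛH0⟩⟩
  haveI : Nontrivial D := by
    obtain ⟨φ, hφ⟩ : ∃ φ : Module.Dual k A, φ ΛA ≠ 0 := by
      by_contra hc
      push_neg at hc
      exact hΛA0 ((Module.forall_dual_apply_eq_zero_iff k ΛA).mp hc)
    obtain ⟨ψ, hψ⟩ : ∃ ψ : Module.Dual k H, ψ ΛH ≠ 0 := by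
      by_contra hc
      push_neg at hc
      exact hΛH0 ((Module.forall_dual_apply_eq_zero_iff k ΛH).mp hc)
    have ht : (ΛA ⊗ₜ[k] ΛH : A ⊗[k] H) ≠ 0 := by
      intro h0
      have := congrArg (LinearMap.mul' k k ∘ₗ TensorProduct.map φ ψ) h0
      simp only [map_zero, LinearMap.comp_apply, TensorProduct.map_tmul,
        LinearMap.mul'_apply] at this
      exact mul_ne_zero hφ hψ this
    refine ⟨⟨f (ΛA ⊗ₜ[k] ΛH), 0, fun h0 => ht ?_⟩⟩
    have := congrArg f.symm h0
    simpa using this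
  obtain ⟨-, -, huniqA, -⟩ := LSAux.integral_package (k := k) (K := A)
  obtain ⟨-, -, -, huniqH⟩ := LSAux.integral_package (k := k) (K := H)
  obtain ⟨⟨Λl, hΛl0, hΛli⟩, ⟨Λr, hΛr0, hΛri⟩, -, -⟩ := LSAux.integral_package (k := k) (K := D)
  -- counit on the tensor product
  have hcounit_tmul : ∀ (a : A) (h : H), Coalgebra.counit (R := k) (a ⊗ₜ[k] h : A ⊗[k] H)
      = Coalgebra.counit (R := k) a * Coalgebra.counit (R := k) h := by
    intro a h
    simp [mul_comm]
  -- conjunct 3: every left integral has the desired form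
  have conj3 : ∀ Λ : D, IsLeftIntegral k Λ → ∃ u : H, Λ = f (ΛA ⊗ₜ u) := by
    intro Λ hΛ
    set t : A ⊗[k] H := f.symm Λ with htdef
    have hft : f t = Λ := f.apply_symm_apply Λ
    -- multiplication identity
    have hmul : ∀ (a : A) (t' : A ⊗[k] H),
        f (a ⊗ₜ[k] (1 : H)) * f t'
          = f ((LinearMap.rTensor H (LinearMap.mulLeft k a)) t') := by
      intro a t'
      induction t' using TensorProduct.induction_on with
      | zero => simp
      | tmul a' h => rw [hmulA]; rfl
      | add u v hu hv =>
          rw [map_add, map_add, mul_add, hu, hv, map_add]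
    have hkey : ∀ a : A, (LinearMap.rTensor H (LinearMap.mulLeft k a)) t
        = Coalgebra.counit (R := k) a • t := by
      intro a
      apply f.injective
      rw [← hmul, hft, hΛ (f (a ⊗ₜ[k] (1 : H))), hcounit, hcounit_tmul,
        show Coalgebra.counit (R := k) (1 : H) = 1 from
          map_one (Bialgebra.counitAlgHom k H), mul_one, map_smul, hft]
    -- components w.r.t. a basis of H
    set bH := Module.finBasis k H with hbH
    set E : (A ⊗[k] H) ≃ₗ[k] (Fin (Module.finrank k H) →₀ A) :=
      (TensorProduct.congr (LinearEquiv.refl k A) bH.repr).trans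
        (TensorProduct.finsuppScalarRight k k A (Fin (Module.finrank k H))) with hE
    have hE_tmul : ∀ (a : A) (h : H) (i : Fin (Module.finrank k H)),
        E (a ⊗ₜ[k] h) i = bH.repr h i • a := by
      intro a h i
      rw [hE]
      simp only [LinearEquiv.trans_apply, TensorProduct.congr_tmul,
        LinearEquiv.refl_apply, TensorProduct.finsuppScalarRight_apply_tmul_apply]
    have hE_symm_single : ∀ (i : Fin (Module.finrank k H)) (a : A),
        E.symm (Finsupp.single i a) = a ⊗ₜ[k] bH i := by
      intro i a
      rw [hE]
      simp only [LinearEquiv.trans_symm, LinearEquiv.trans_apply,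
        TensorProduct.finsuppScalarRight_symm_apply_single]
      rw [TensorProduct.congr_symm_tmul]
      simp [Module.Basis.repr_symm_single_one]
    -- each component is a left integral of A
    have hcomp : ∀ i, IsLeftIntegral k (E t i) := by
      intro i a
      have hcommute : ∀ t' : A ⊗[k] H,
          E ((LinearMap.rTensor H (LinearMap.mulLeft k a)) t') i = a * (E t' i) := by
        intro t'
        induction t' using TensorProduct.induction_on with
        | zero => simp
        | tmul a' h =>
            rw [LinearMap.rTensor_tmul, hE_tmul, hE_tmul, LinearMap.mulLeft_apply,
              mul_smul_comm]
        | add u v hu hv => simp [map_add, Finsupp.add_apply, hu, hv, mul_add]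
      have h3 := congrArg (fun s : A ⊗[k] H => E s i) (hkey a)
      rw [hcommute t] at h3
      rw [h3, map_smul, Finsupp.smul_apply]
    -- write each component as a multiple of ΛA
    have hc : ∀ i, ∃ c : k, E t i = c • ΛA := fun i =>
      huniqA ΛA (E t i) hΛA0 hΛA (hcomp i)
    choose c hcval using hc
    refine ⟨∑ i ∈ (E t).support, c i • bH i, ?_⟩
    have h4 : (∑ i ∈ (E t).support, Finsupp.single i (E t i)) = E t :=
      Finsupp.sum_single (E t)
    have hmain : t = ΛA ⊗ₜ[k] (∑ i ∈ (E t).support, c i • bH i) := by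
      calc t = E.symm (∑ i ∈ (E t).support, Finsupp.single i (E t i)) := by
            rw [h4, E.symm_apply_apply]
        _ = ∑ i ∈ (E t).support, (E t i) ⊗ₜ[k] bH i := by
            rw [map_sum]
            exact Finset.sum_congr rfl fun i _ => hE_symm_single i (E t i)
        _ = ∑ i ∈ (E t).support, ΛA ⊗ₜ[k] (c i • bH i) := by
            refine Finset.sum_congr rfl fun i _ => ?_
            rw [hcval i, TensorProduct.smul_tmul]
        _ = ΛA ⊗ₜ[k] (∑ i ∈ (E t).support, c i • bH i) :=
            (TensorProduct.tmul_sum _ _ _).symm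
    rw [← hft]
    exact congrArg f hmain
  -- conjunct 4: every right integral has the desired form
  have conj4 : ∀ Λ : D, IsRightIntegral k Λ → ∃ v : A, Λ = f (v ⊗ₜ ΛH) := by
    intro Λ hΛ
    set t : A ⊗[k] H := f.symm Λ with htdef
    have hft : f t = Λ := f.apply_symm_apply Λ
    have hmul : ∀ (h : H) (t' : A ⊗[k] H),
        f t' * f ((1 : A) ⊗ₜ[k] h)
          = f ((LinearMap.lTensor A (LinearMap.mulRight k h)) t') := by
      intro h t'
      induction t' using TensorProduct.induction_on with
      | zero => simp
      | tmul a' h' => rw [hmulH]; rfl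
      | add u v hu hv =>
          rw [map_add, map_add, add_mul, hu, hv, map_add]
    have hkey : ∀ h : H, (LinearMap.lTensor A (LinearMap.mulRight k h)) t
        = Coalgebra.counit (R := k) h • t := by
      intro h
      apply f.injective
      rw [← hmul, hft, hΛ (f ((1 : A) ⊗ₜ[k] h)), hcounit, hcounit_tmul,
        show Coalgebra.counit (R := k) (1 : A) = 1 from
          map_one (Bialgebra.counitAlgHom k A), one_mul, map_smul, hft]
    set bA := Module.finBasis k A with hbA
    set E : (A ⊗[k] H) ≃ₗ[k] (Fin (Module.finrank k A) →₀ H) :=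
      (TensorProduct.congr bA.repr (LinearEquiv.refl k H)).trans
        (TensorProduct.finsuppScalarLeft k H (Fin (Module.finrank k A))) with hE
    have hE_tmul : ∀ (a : A) (h : H) (i : Fin (Module.finrank k A)),
        E (a ⊗ₜ[k] h) i = bA.repr a i • h := by
      intro a h i
      rw [hE]
      simp only [LinearEquiv.trans_apply, TensorProduct.congr_tmul,
        LinearEquiv.refl_apply, TensorProduct.finsuppScalarLeft_apply_tmul_apply]
    have hE_symm_single : ∀ (i : Fin (Module.finrank k A)) (h : H),
        E.symm (Finsupp.single i h) = bA i ⊗ₜ[k] h := by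
      intro i h
      rw [hE]
      simp only [LinearEquiv.trans_symm, LinearEquiv.trans_apply,
        TensorProduct.finsuppScalarLeft_symm_apply_single]
      rw [TensorProduct.congr_symm_tmul]
      simp [Module.Basis.repr_symm_single_one]
    have hcomp : ∀ i, IsRightIntegral k (E t i) := by
      intro i h
      have hcommute : ∀ t' : A ⊗[k] H,
          E ((LinearMap.lTensor A (LinearMap.mulRight k h)) t') i = (E t' i) * h := by
        intro t'
        induction t' using TensorProduct.induction_on with
        | zero => simp
        | tmul a' h' =>
            rw [LinearMap.lTensor_tmul, hE_tmul, hE_tmul, LinearMap.mulRight_apply,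
              smul_mul_assoc]
        | add u v hu hv => simp [map_add, Finsupp.add_apply, hu, hv, add_mul]
      have h3 := congrArg (fun s : A ⊗[k] H => E s i) (hkey h)
      rw [hcommute t] at h3
      rw [h3, map_smul, Finsupp.smul_apply]
    have hc : ∀ i, ∃ c : k, E t i = c • ΛH := fun i =>
      huniqH ΛH (E t i) hΛH0 hΛH (hcomp i)
    choose c hcval using hc
    refine ⟨∑ i ∈ (E t).support, c i • bA i, ?_⟩
    have h4 : (∑ i ∈ (E t).support, Finsupp.single i (E t i)) = E t :=
      Finsupp.sum_single (E t)
    have hmain : t = (∑ i ∈ (E t).support, c i • bA i) ⊗ₜ[k] ΛH := by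
      calc t = E.symm (∑ i ∈ (E t).support, Finsupp.single i (E t i)) := by
            rw [h4, E.symm_apply_apply]
        _ = ∑ i ∈ (E t).support, (bA i) ⊗ₜ[k] (E t i) := by
            rw [map_sum]
            exact Finset.sum_congr rfl fun i _ => hE_symm_single i (E t i)
        _ = ∑ i ∈ (E t).support, (c i • bA i) ⊗ₜ[k] ΛH := by
            refine Finset.sum_congr rfl fun i _ => ?_
            rw [hcval i, TensorProduct.smul_tmul]
        _ = (∑ i ∈ (E t).support, c i • bA i) ⊗ₜ[k] ΛH :=
            (TensorProduct.sum_tmul _ _ _).symm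
    rw [← hft]
    exact congrArg f hmain
  obtain ⟨u, hu⟩ := conj3 Λl hΛli
  obtain ⟨v, hv⟩ := conj4 Λr hΛri
  exact ⟨⟨u, hu ▸ hΛl0, hu ▸ hΛli⟩, ⟨v, hv ▸ hΛr0, hv ▸ hΛri⟩, conj3, conj4⟩
end

section
/- Let D = A ⋈ H be a double cross product of finite-dimensional Hopf algebras A and H. If D is semisimple, then both A and H are semisimple. -/
/-!
A Hopf algebra with a left integral `Λ` and `ε Λ = 1` is semisimple, because
`∑ Λ₁ ⊗ S Λ₂` is a separability idempotent; likewise `∑ S Λ₁ ⊗ Λ₂` for a right integral.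
A semisimple `D` has normalized left and right integrals (split the augmentation ideal off).
Multiplication in `D = A ⋈ H` is left multiplication by `A` and right multiplication by `H` in
the coordinates `A ⊗ H`, so `id ⊗ ε` carries the left integral of `D` to one of `A`, and
`ε ⊗ id` carries the right integral of `D` to one of `H`, both still of counit `1`.
-/

open TensorProduct Coalgebra HopfAlgebra

theorem exists_mul_eq_smul_of_isSemisimpleRing {k R : Type*} [CommRing k] [Ring R] [Algebra k R]
    [IsSemisimpleRing R] (χ : R →ₐ[k] k) : ∃ u : R, χ u = 1 ∧ ∀ r, r * u = χ r • u := by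
  -- `u` is the component of `1` in a complement of `ker χ`.
  obtain ⟨J, hJ⟩ := ComplementedLattice.exists_isCompl (RingHom.ker χ)
  obtain ⟨e, he, u, hu, heu⟩ :=
    Submodule.mem_sup.mp (hJ.sup_eq_top ▸ Submodule.mem_top (x := (1 : R)))
  refine ⟨u, by simpa [RingHom.mem_ker.mp he] using congrArg χ heu, fun r => ?_⟩
  set d := r - algebraMap k R (χ r)
  have hd : d ∈ RingHom.ker χ := by simp [d]
  have hdu : d * u = d - d * e := by rw [eq_sub_iff_add_eq, ← mul_add, add_comm, heu, mul_one]
  have : d * u ∈ RingHom.ker χ ⊓ J :=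
    ⟨hdu ▸ sub_mem hd (Ideal.mul_mem_left _ d he), J.smul_mem d hu⟩
  rw [hJ.inf_eq_bot, Submodule.mem_bot, sub_mul, sub_eq_zero] at this
  rw [this, Algebra.smul_def]

theorem exists_mul_eq_smul_of_isSemisimpleRing' {k R : Type*} [CommRing k] [Ring R] [Algebra k R]
    [IsSemisimpleRing R] (χ : R →ₐ[k] k) : ∃ u : R, χ u = 1 ∧ ∀ r, u * r = χ r • u := by
  obtain ⟨u, hu, hmul⟩ := exists_mul_eq_smul_of_isSemisimpleRing
    (χ.fromOpposite fun _ _ => Commute.all _ _)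
  exact ⟨u.unop, hu, fun r => congrArg MulOpposite.unop (hmul (MulOpposite.op r))⟩

/-- Averaging a `k`-linear projection onto a left ideal against `e` makes it `R`-linear. -/
theorem isSemisimpleRing_of_separabilityIdempotent {k R : Type*} [Field k] [Ring R] [Algebra k R]
    (e : R ⊗[k] R) (he : LinearMap.mul' k R e = 1)
    (hcomm : ∀ a : R, (a ⊗ₜ[k] 1) * e = e * (1 ⊗ₜ[k] a)) : IsSemisimpleRing R := by
  refine (isSemisimpleModule_iff R R).mpr ⟨fun W => ?_⟩
  obtain ⟨C, hC⟩ := Submodule.exists_isCompl (W.restrictScalars k)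
  let p : R →ₗ[k] R := (W.restrictScalars k).subtype ∘ₗ (W.restrictScalars k).projectionOnto C hC
  have hp_id : ∀ w ∈ W, p w = w := fun w hw =>
    congrArg Subtype.val (Submodule.projectionOnto_apply_left hC ⟨w, hw⟩)
  let T : R ⊗[k] R →ₗ[k] R := LinearMap.mul' k R ∘ₗ p.lTensor R
  have hT_mem (y : R ⊗[k] R) : T y ∈ W := by
    induction y using TensorProduct.induction_on with
    | zero => simp
    | tmul u v => exact W.smul_mem u (Submodule.coe_mem _)
    | add y z hy hz => simpa using W.add_mem hy hz
  have hT_mul_left (a : R) (y : R ⊗[k] R) : T ((a ⊗ₜ[k] 1) * y) = a * T y := by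
    induction y using TensorProduct.induction_on with
    | zero => simp
    | tmul u v => simp [T, mul_assoc]
    | add y z hy hz => simp only [mul_add, map_add, hy, hz]
  have hT_mul_right (y : R ⊗[k] R) (w : R) (hw : w ∈ W) :
      T (y * (1 ⊗ₜ[k] w)) = LinearMap.mul' k R y * w := by
    induction y using TensorProduct.induction_on with
    | zero => simp
    | tmul u v => simp [T, hp_id (v * w) (W.smul_mem v hw), mul_assoc]
    | add y z hy hz => simp only [add_mul, map_add, hy, hz]
  let ρ : R →ₗ[R] W :=
    { toFun := fun v => ⟨T (e * (1 ⊗ₜ v)), hT_mem _⟩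
      map_add' := fun v w => by simp [tmul_add, mul_add]
      map_smul' := fun a v => by
        have h1 : (1 : R) ⊗ₜ[k] (a * v) = (1 ⊗ₜ a) * (1 ⊗ₜ v) := by simp
        ext
        simp only [smul_eq_mul, RingHom.id_apply, SetLike.val_smul, h1]
        rw [← mul_assoc, ← hcomm, mul_assoc, hT_mul_left] }
  exact ⟨_, LinearMap.isCompl_of_proj (f := ρ) fun w =>
    Subtype.ext (by simp [ρ, hT_mul_right e w w.2, he])⟩

theorem Coalgebra.sum_smul_counit {R A ι : Type*} [CommSemiring R] [AddCommMonoid A] [Module R A]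
    [Coalgebra R A] {a : A} (𝓡 : Repr R a ι) :
    ∑ i ∈ 𝓡.index, counit (R := R) (𝓡.right i) • 𝓡.left i = a := by
  simpa only [map_sum, _root_.TensorProduct.rid_tmul, one_smul] using
    congrArg (_root_.TensorProduct.rid R A) (sum_tmul_counit_eq 𝓡)

section SweedlerIdentities

variable {R A ι : Type*} [CommSemiring R] [Semiring A] [HopfAlgebra R A]

lemma lTensor_antipode_comul_eq_sum {x : A} (𝓡 : Repr R x ι) :
    (antipode R).lTensor A (comul x) = ∑ i ∈ 𝓡.index, 𝓡.left i ⊗ₜ antipode R (𝓡.right i) := by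
  simp [← 𝓡.eq, map_sum]

lemma lTensor_antipode_comul_mul (y x : A) (𝓡 : Repr R y ι) :
    (antipode R).lTensor A (comul (y * x)) = ∑ i ∈ 𝓡.index,
      (𝓡.left i ⊗ₜ[R] 1) * (antipode R).lTensor A (comul x) * (1 ⊗ₜ antipode R (𝓡.right i)) := by
  rw [lTensor_antipode_comul_eq_sum (𝓡.mul (ℛ R x)), lTensor_antipode_comul_eq_sum (ℛ R x),
    Repr.mul_index, Finset.sum_product]
  simp [Finset.mul_sum, Finset.sum_mul, antipode_mul_antidistrib]

lemma tmul_one_mul_lTensor_antipode_comul_eq_sum (a x : A) (𝓡 : Repr R a ι) :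
    (a ⊗ₜ[R] 1) * (antipode R).lTensor A (comul x) =
      ∑ i ∈ 𝓡.index, (antipode R).lTensor A (comul (𝓡.left i * x)) * (1 ⊗ₜ 𝓡.right i) := by
  -- `∑ a₁ x₁ ⊗ S x₂ S a₂ a₃ = ∑ a x₁ ⊗ S x₂`, with coassociativity applied through `χ`.
  set z := (antipode R).lTensor A (comul x)
  let χ : A ⊗[R] (A ⊗[R] A) →ₗ[R] A ⊗[R] A := LinearMap.mul' R (A ⊗[R] A) ∘ₗ
    TensorProduct.map (LinearMap.mulRight R z ∘ₗ Algebra.TensorProduct.includeLeft.toLinearMap)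
      (Algebra.TensorProduct.includeRight.toLinearMap ∘ₗ LinearMap.mul' R A ∘ₗ
        (antipode R).rTensor A)
  have hχ (u v w : A) : χ (u ⊗ₜ (v ⊗ₜ w)) = (u ⊗ₜ 1) * z * (1 ⊗ₜ (antipode R v * w)) := by
    simp [χ]
  have coassoc := congrArg χ
    (sum_tmul_tmul_eq 𝓡 (fun i => ℛ R (𝓡.left i)) (fun i => ℛ R (𝓡.right i)))
  simp only [map_sum, hχ] at coassoc
  calc (a ⊗ₜ[R] 1) * z
      = ∑ i ∈ 𝓡.index, counit (R := R) (𝓡.right i) • ((𝓡.left i ⊗ₜ[R] 1) * z) := by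
        conv_lhs => rw [← sum_smul_counit 𝓡]
        simp [TensorProduct.sum_tmul, Finset.sum_mul, ← smul_tmul']
    _ = ∑ i ∈ 𝓡.index, ∑ j ∈ (ℛ R (𝓡.right i)).index, (𝓡.left i ⊗ₜ[R] 1) * z *
          (1 ⊗ₜ (antipode R ((ℛ R (𝓡.right i)).left j) * (ℛ R (𝓡.right i)).right j)) := by
        simp_rw [← Finset.mul_sum, ← TensorProduct.tmul_sum, sum_antipode_mul_eq_algebraMap_counit,
          Algebra.algebraMap_eq_smul_one, TensorProduct.tmul_smul, mul_smul_comm,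
          ← Algebra.TensorProduct.one_def, mul_one]
    _ = ∑ i ∈ 𝓡.index, ∑ j ∈ (ℛ R (𝓡.left i)).index, ((ℛ R (𝓡.left i)).left j ⊗ₜ[R] 1) * z *
          (1 ⊗ₜ (antipode R ((ℛ R (𝓡.left i)).right j) * 𝓡.right i)) := coassoc.symm
    _ = _ := by
        simp_rw [lTensor_antipode_comul_mul _ x (ℛ R (𝓡.left _)), Finset.sum_mul, mul_assoc,
          Algebra.TensorProduct.tmul_mul_tmul, one_mul]
        rfl

lemma rTensor_antipode_comul_eq_sum {x : A} (𝓡 : Repr R x ι) :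
    (antipode R).rTensor A (comul x) = ∑ i ∈ 𝓡.index, antipode R (𝓡.left i) ⊗ₜ 𝓡.right i := by
  simp [← 𝓡.eq, map_sum]

lemma rTensor_antipode_comul_mul (x y : A) (𝓡 : Repr R y ι) :
    (antipode R).rTensor A (comul (x * y)) = ∑ i ∈ 𝓡.index,
      (antipode R (𝓡.left i) ⊗ₜ[R] 1) * (antipode R).rTensor A (comul x) * (1 ⊗ₜ 𝓡.right i) := by
  rw [rTensor_antipode_comul_eq_sum ((ℛ R x).mul 𝓡), rTensor_antipode_comul_eq_sum (ℛ R x),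
    Repr.mul_index, Finset.sum_product, Finset.sum_comm]
  simp [Finset.mul_sum, Finset.sum_mul, antipode_mul_antidistrib]

lemma rTensor_antipode_comul_mul_one_tmul_eq_sum (a x : A) (𝓡 : Repr R a ι) :
    (antipode R).rTensor A (comul x) * (1 ⊗ₜ[R] a) =
      ∑ i ∈ 𝓡.index, (𝓡.left i ⊗ₜ 1) * (antipode R).rTensor A (comul (x * 𝓡.right i)) := by
  -- `∑ a₁ S a₂ S x₁ ⊗ x₂ a₃ = ∑ S x₁ ⊗ x₂ a`, with coassociativity applied through `χ`.
  set z := (antipode R).rTensor A (comul x)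
  let χ : A ⊗[R] (A ⊗[R] A) →ₗ[R] A ⊗[R] A := LinearMap.mul' R (A ⊗[R] A) ∘ₗ
    TensorProduct.map (Algebra.TensorProduct.includeLeft.toLinearMap ∘ₗ LinearMap.mul' R A ∘ₗ
        (antipode R).lTensor A)
      (LinearMap.mulLeft R z ∘ₗ Algebra.TensorProduct.includeRight.toLinearMap) ∘ₗ
    (TensorProduct.assoc R A A A).symm.toLinearMap
  have hχ (u v w : A) : χ (u ⊗ₜ (v ⊗ₜ w)) = ((u * antipode R v) ⊗ₜ 1) * z * (1 ⊗ₜ w) := by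
    simp [χ, mul_assoc]
  have coassoc := congrArg χ
    (sum_tmul_tmul_eq 𝓡 (fun i => ℛ R (𝓡.left i)) (fun i => ℛ R (𝓡.right i)))
  simp only [map_sum, hχ] at coassoc
  calc z * (1 ⊗ₜ[R] a)
      = ∑ i ∈ 𝓡.index, counit (R := R) (𝓡.left i) • (z * (1 ⊗ₜ[R] 𝓡.right i)) := by
        conv_lhs => rw [← sum_counit_smul 𝓡]
        simp [TensorProduct.tmul_sum, Finset.mul_sum]
    _ = ∑ i ∈ 𝓡.index, ∑ j ∈ (ℛ R (𝓡.left i)).index, (((ℛ R (𝓡.left i)).left j *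
          antipode R ((ℛ R (𝓡.left i)).right j)) ⊗ₜ[R] 1) * z * (1 ⊗ₜ 𝓡.right i) := by
        simp_rw [← Finset.sum_mul, ← TensorProduct.sum_tmul, sum_mul_antipode_eq_algebraMap_counit,
          Algebra.algebraMap_eq_smul_one, ← TensorProduct.smul_tmul', smul_mul_assoc,
          ← Algebra.TensorProduct.one_def, one_mul]
    _ = ∑ i ∈ 𝓡.index, ∑ j ∈ (ℛ R (𝓡.right i)).index, ((𝓡.left i *
          antipode R ((ℛ R (𝓡.right i)).left j)) ⊗ₜ[R] 1) * z * (1 ⊗ₜ (ℛ R (𝓡.right i)).right j) :=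
        coassoc
    _ = _ := by
        simp_rw [rTensor_antipode_comul_mul x _ (ℛ R (𝓡.right _)), Finset.mul_sum, ← mul_assoc,
          Algebra.TensorProduct.tmul_mul_tmul, one_mul]
        rfl

end SweedlerIdentities

namespace HopfAlgebra

section Integrals

variable {R A : Type*} [CommSemiring R] [Semiring A]

variable (R) in
def IsLeftIntegral [Bialgebra R A] (Λ : A) : Prop := ∀ a : A, a * Λ = counit (R := R) a • Λ

variable (R) in
def IsRightIntegral [Bialgebra R A] (Λ : A) : Prop := ∀ a : A, Λ * a = counit (R := R) a • Λ

theorem exists_isLeftIntegral_counit_eq_one (R A : Type*) [CommRing R] [Ring A] [Bialgebra R A]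
    [IsSemisimpleRing A] : ∃ Λ : A, IsLeftIntegral R Λ ∧ counit (R := R) Λ = 1 := by
  obtain ⟨Λ, hε, hΛ⟩ := exists_mul_eq_smul_of_isSemisimpleRing (Bialgebra.counitAlgHom R A)
  exact ⟨Λ, hΛ, hε⟩

theorem exists_isRightIntegral_counit_eq_one (R A : Type*) [CommRing R] [Ring A] [Bialgebra R A]
    [IsSemisimpleRing A] : ∃ Λ : A, IsRightIntegral R Λ ∧ counit (R := R) Λ = 1 := by
  obtain ⟨Λ, hε, hΛ⟩ := exists_mul_eq_smul_of_isSemisimpleRing' (Bialgebra.counitAlgHom R A)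
  exact ⟨Λ, hΛ, hε⟩

theorem IsLeftIntegral.tmul_one_mul_lTensor_antipode_comul [HopfAlgebra R A] {Λ : A}
    (hΛ : IsLeftIntegral R Λ) (a : A) :
    (a ⊗ₜ[R] 1) * (antipode R).lTensor A (comul Λ) =
      (antipode R).lTensor A (comul Λ) * (1 ⊗ₜ a) := by
  conv_rhs => rw [← sum_counit_smul (ℛ R a)]
  rw [tmul_one_mul_lTensor_antipode_comul_eq_sum a Λ (ℛ R a)]
  simp [hΛ _, TensorProduct.tmul_sum, Finset.mul_sum]

theorem IsRightIntegral.tmul_one_mul_rTensor_antipode_comul [HopfAlgebra R A] {Λ : A}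
    (hΛ : IsRightIntegral R Λ) (a : A) :
    (a ⊗ₜ[R] 1) * (antipode R).rTensor A (comul Λ) =
      (antipode R).rTensor A (comul Λ) * (1 ⊗ₜ a) := by
  conv_lhs => rw [← sum_smul_counit (ℛ R a)]
  simp [rTensor_antipode_comul_mul_one_tmul_eq_sum a Λ (ℛ R a), hΛ _, TensorProduct.sum_tmul,
    Finset.sum_mul, ← smul_tmul']

end Integrals

section Maschke

variable {k A : Type*} [Field k] [Ring A] [HopfAlgebra k A] {Λ : A}

theorem IsLeftIntegral.isSemisimpleRing (hΛ : IsLeftIntegral k Λ) (hε : counit (R := k) Λ = 1) :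
    IsSemisimpleRing A :=
  isSemisimpleRing_of_separabilityIdempotent _ (by simp [hε])
    hΛ.tmul_one_mul_lTensor_antipode_comul

theorem IsRightIntegral.isSemisimpleRing (hΛ : IsRightIntegral k Λ)
    (hε : counit (R := k) Λ = 1) : IsSemisimpleRing A :=
  isSemisimpleRing_of_separabilityIdempotent _ (by simp [hε])
    hΛ.tmul_one_mul_rTensor_antipode_comul

end Maschke

section DoubleCrossProduct

variable {R A H D : Type*} [CommSemiring R] [Semiring A] [Semiring H] [Semiring D]
  [Bialgebra R A] [Bialgebra R H] [Bialgebra R D] (f : A ⊗[R] H ≃ₗ[R] D)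

theorem counit_rid_lTensor_counit (x : A ⊗[R] H) :
    counit (R := R) (TensorProduct.rid R A (counit.lTensor A x)) = counit x := by
  induction x using TensorProduct.induction_on with
  | zero => simp
  | tmul a h => simp
  | add x y hx hy => simp only [map_add, hx, hy]

theorem counit_lid_rTensor_counit (x : A ⊗[R] H) :
    counit (R := R) (TensorProduct.lid R H (counit.rTensor H x)) = counit x := by
  induction x using TensorProduct.induction_on with
  | zero => simp
  | tmul a h => simp [mul_comm]
  | add x y hx hy => simp only [map_add, hx, hy]

theorem IsLeftIntegral.rid_lTensor_counit_symm
    (hmulA : ∀ (a a' : A) (h : H), f (a ⊗ₜ 1) * f (a' ⊗ₜ h) = f ((a * a') ⊗ₜ h))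
    (hcounit : ∀ x, counit (R := R) (f x) = counit (R := R) x) {Λ : D}
    (hΛ : IsLeftIntegral R Λ) :
    IsLeftIntegral R (TensorProduct.rid R A (counit.lTensor A (f.symm Λ))) := by
  intro a
  have hf_mul (x : A ⊗[R] H) : f (a ⊗ₜ 1) * f x = f ((a ⊗ₜ 1) * x) := by
    induction x using TensorProduct.induction_on with
    | zero => simp
    | tmul a' h => simp [hmulA]
    | add x y hx hy => simp only [map_add, mul_add, hx, hy]
  have hπ_mul (x : A ⊗[R] H) :
      TensorProduct.rid R A (counit.lTensor A ((a ⊗ₜ 1) * x)) =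
        a * TensorProduct.rid R A (counit.lTensor A x) := by
    induction x using TensorProduct.induction_on with
    | zero => simp
    | tmul a' h => simp
    | add x y hx hy => simp only [map_add, mul_add, hx, hy]
  have ht : (a ⊗ₜ[R] (1 : H)) * f.symm Λ = counit (R := R) a • f.symm Λ := by
    apply f.injective
    rw [← hf_mul, f.apply_symm_apply, hΛ, hcounit, map_smul, f.apply_symm_apply]
    simp
  rw [← hπ_mul, ht, map_smul, map_smul]

theorem IsRightIntegral.lid_rTensor_counit_symm
    (hmulH : ∀ (a : A) (h h' : H), f (a ⊗ₜ h) * f (1 ⊗ₜ h') = f (a ⊗ₜ (h * h')))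
    (hcounit : ∀ x, counit (R := R) (f x) = counit (R := R) x) {Λ : D}
    (hΛ : IsRightIntegral R Λ) :
    IsRightIntegral R (TensorProduct.lid R H (counit.rTensor H (f.symm Λ))) := by
  intro h
  have hf_mul (x : A ⊗[R] H) : f x * f (1 ⊗ₜ h) = f (x * (1 ⊗ₜ h)) := by
    induction x using TensorProduct.induction_on with
    | zero => simp
    | tmul a h' => simp [hmulH]
    | add x y hx hy => simp only [map_add, add_mul, hx, hy]
  have hπ_mul (x : A ⊗[R] H) :
      TensorProduct.lid R H (counit.rTensor H (x * (1 ⊗ₜ h))) =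
        TensorProduct.lid R H (counit.rTensor H x) * h := by
    induction x using TensorProduct.induction_on with
    | zero => simp
    | tmul a h' => simp
    | add x y hx hy => simp only [map_add, add_mul, hx, hy]
  have ht : f.symm Λ * ((1 : A) ⊗ₜ[R] h) = counit (R := R) h • f.symm Λ := by
    apply f.injective
    rw [← hf_mul, f.apply_symm_apply, hΛ, hcounit, map_smul, f.apply_symm_apply]
    simp
  rw [← hπ_mul, ht, map_smul, map_smul]

end DoubleCrossProduct

end HopfAlgebra

theorem semisimple_of_double_cross_product_general (k A H D : Type*) [Field k]
    [Ring A] [HopfAlgebra k A] [Ring H] [HopfAlgebra k H] [Ring D] [HopfAlgebra k D]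
    (f : (A ⊗[k] H) ≃ₗ[k] D)
    (hmulA : ∀ (a a' : A) (h : H), f (a ⊗ₜ 1) * f (a' ⊗ₜ h) = f ((a * a') ⊗ₜ h))
    (hmulH : ∀ (a : A) (h h' : H), f (a ⊗ₜ h) * f (1 ⊗ₜ h') = f (a ⊗ₜ (h * h')))
    (hcounit : ∀ x : A ⊗[k] H,
      Coalgebra.counit (R := k) (f x) = Coalgebra.counit (R := k) x)
    (hss : IsSemisimpleRing D) :
    IsSemisimpleRing A ∧ IsSemisimpleRing H := by
  have hε_symm (Λ : D) : counit (R := k) (f.symm Λ) = counit Λ := by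
    rw [← hcounit, f.apply_symm_apply]
  obtain ⟨Λl, hl, hεl⟩ := exists_isLeftIntegral_counit_eq_one k D
  obtain ⟨Λr, hr, hεr⟩ := exists_isRightIntegral_counit_eq_one k D
  exact ⟨(hl.rid_lTensor_counit_symm f hmulA hcounit).isSemisimpleRing
      (by rw [counit_rid_lTensor_counit, hε_symm, hεl]),
    (hr.lid_rTensor_counit_symm f hmulH hcounit).isSemisimpleRing
      (by rw [counit_lid_rTensor_counit, hε_symm, hεr])⟩

/-- Let `D = A ⋈ H` be a double cross product of finite-dimensional Hopf algebras `A` and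
`H` (the algebra structure of `D` restricts to that of `A` on `A ⊗ 1` and of `H` on
`1 ⊗ H`, with `(a ⊗ 1)(a' ⊗ h) = aa' ⊗ h`, `(a ⊗ h)(1 ⊗ h') = a ⊗ hh'` and
`ε_D = ε_A ⊗ ε_H`).  If `D` is semisimple, then both `A` and `H` are semisimple. -/
theorem semisimple_of_double_cross_product (k A H D : Type*) [Field k]
    [Ring A] [HopfAlgebra k A] [Ring H] [HopfAlgebra k H] [Ring D] [HopfAlgebra k D]
    [FiniteDimensional k A] [FiniteDimensional k H] [FiniteDimensional k D]
    (f : (A ⊗[k] H) ≃ₗ[k] D)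
    (hone : f (1 ⊗ₜ 1) = 1)
    (hmulA : ∀ (a a' : A) (h : H), f (a ⊗ₜ 1) * f (a' ⊗ₜ h) = f ((a * a') ⊗ₜ h))
    (hmulH : ∀ (a : A) (h h' : H), f (a ⊗ₜ h) * f (1 ⊗ₜ h') = f (a ⊗ₜ (h * h')))
    (hcounit : ∀ x : A ⊗[k] H,
      Coalgebra.counit (R := k) (f x) = Coalgebra.counit (R := k) x)
    (hss : IsSemisimpleRing D) :
    IsSemisimpleRing A ∧ IsSemisimpleRing H :=
  semisimple_of_double_cross_product_general k A H D f hmulA hmulH hcounit hss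
end

section
/- If D = A ⋈ H is a double cross product of finite-dimensional Hopf algebras and D is cosemisimple, then A and H are cosemisimple. -/
open TensorProduct

/-- A subspace `V` of a coalgebra `H` is a subcoalgebra if `Δ(V) ⊆ V ⊗ V` inside `H ⊗ H`. -/
def IsSubcoalgebra (k : Type*) {H : Type*} [CommRing k] [AddCommGroup H] [Module k H]
    [Coalgebra k H] (V : Submodule k H) : Prop :=
  ∀ x ∈ V, Coalgebra.comul (R := k) x ∈
    LinearMap.range (TensorProduct.map V.subtype V.subtype)

/-- A coalgebra is cosemisimple if it is the sum of its simple subcoalgebras. -/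
def IsCosemisimple (k H : Type*) [CommRing k] [AddCommGroup H] [Module k H]
    [Coalgebra k H] : Prop :=
  sSup {V : Submodule k H | IsSubcoalgebra k V ∧ V ≠ ⊥ ∧
    ∀ W ≤ V, IsSubcoalgebra k W → W = ⊥ ∨ W = V} = ⊤


/-!
Over a field, sums and (by flatness) intersections of subcoalgebras are again subcoalgebras, so
the subcoalgebras of `C` form a modular lattice whose atoms are the simple subcoalgebras. When `C`
is finite-dimensional this lattice is compactly generated, and `C` is cosemisimple exactly when
the atoms span it, i.e. when the lattice is complemented. An injective coalgebra map `A → D`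
identifies the subcoalgebras of `A` with those of `D` lying below its image, and intervals of a
complemented modular lattice are complemented; so cosemisimplicity passes from `D` to `A`.
Finally `a ↦ a ⊗ 1` and `h ↦ 1 ⊗ h` embed `A` and `H` into the coalgebra `A ⋈ H ≅ A ⊗ H`.
-/

open LinearMap Coalgebra

section CommRing

variable {k : Type*} [CommRing k]

lemma TensorProduct.range_mapIncl_map {M N P Q : Type*}
    [AddCommMonoid M] [Module k M] [AddCommMonoid N] [Module k N]
    [AddCommMonoid P] [Module k P] [AddCommMonoid Q] [Module k Q]
    (f : M →ₗ[k] P) (g : N →ₗ[k] Q) (V : Submodule k M) (W : Submodule k N) :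
    range (mapIncl (V.map f) (W.map g)) = (range (mapIncl V W)).map (map f g) := by
  rw [range_mapIncl, range_mapIncl, Submodule.map₂_map_map, Submodule.map_map₂]
  rfl

variable {C : Type*} [AddCommGroup C] [Module k C] [Coalgebra k C]

lemma isSubcoalgebra_iff_le_comap {V : Submodule k C} :
    IsSubcoalgebra k V ↔ V ≤ (range (mapIncl V V)).comap (comul (R := k)) :=
  Iff.rfl

lemma isSubcoalgebra_top : IsSubcoalgebra k (⊤ : Submodule k C) := by
  rw [isSubcoalgebra_iff_le_comap, range_mapIncl, TensorProduct.map₂_mk_top_top_eq_top,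
    Submodule.comap_top]

lemma isSubcoalgebra_sSup {S : Set (Submodule k C)} (hS : ∀ V ∈ S, IsSubcoalgebra k V) :
    IsSubcoalgebra k (sSup S) :=
  isSubcoalgebra_iff_le_comap.mpr <| sSup_le fun V hV =>
    (isSubcoalgebra_iff_le_comap.mp (hS V hV)).trans
      (Submodule.comap_mono (range_mapIncl_mono (le_sSup hV) (le_sSup hV)))

lemma IsSubcoalgebra.map {D : Type*} [AddCommGroup D] [Module k D] [Coalgebra k D]
    (g : C →ₗc[k] D) {V : Submodule k C} (hV : IsSubcoalgebra k V) :
    IsSubcoalgebra k (V.map (g : C →ₗ[k] D)) := by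
  rintro _ ⟨x, hx, rfl⟩
  rw [CoalgHom.coe_toLinearMap, ← CoalgHomClass.map_comp_comul_apply,
    TensorProduct.range_mapIncl_map]
  exact Submodule.mem_map_of_mem (hV x hx)

end CommRing

namespace TensorProduct

variable {k M N : Type*} [Field k] [AddCommGroup M] [Module k M] [AddCommGroup N] [Module k N]

lemma prodLeft_rTensor_prod {P Q : Type*} [AddCommGroup P] [Module k P]
    [AddCommGroup Q] [Module k Q] (f : M →ₗ[k] P) (g : M →ₗ[k] Q) (t : M ⊗[k] N) :
    prodLeft k k P Q N (rTensor N (f.prod g) t) = (rTensor N f t, rTensor N g t) := by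
  induction t using TensorProduct.induction_on with
  | zero => simp only [map_zero, Prod.mk_zero_zero]
  | tmul m n => simp
  | add x y hx hy => simp [hx, hy]

lemma range_rTensor_subtype_inf (V W : Submodule k M) :
    range (rTensor N V.subtype) ⊓ range (rTensor N W.subtype) =
      range (rTensor N (V ⊓ W).subtype) := by
  refine le_antisymm (fun t ht => ?_) (le_inf ?_ ?_)
  · rw [Submodule.mem_inf, ← rTensor_mkQ, ← rTensor_mkQ, mem_ker, mem_ker] at ht
    have hexact := Module.Flat.rTensor_exact N (exact_subtype_ker_map (V.mkQ.prod W.mkQ))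
    rw [ker_prod, Submodule.ker_mkQ, Submodule.ker_mkQ] at hexact
    rw [← exact_iff.mp hexact, mem_ker]
    apply (prodLeft k k _ _ N).injective
    rw [prodLeft_rTensor_prod, ht.1, ht.2, map_zero, Prod.mk_zero_zero]
  · rw [← Submodule.subtype_comp_inclusion _ _ inf_le_left, rTensor_comp]
    exact range_comp_le_range _ _
  · rw [← Submodule.subtype_comp_inclusion _ _ inf_le_right, rTensor_comp]
    exact range_comp_le_range _ _

lemma range_lTensor_subtype_inf (V W : Submodule k N) :
    range (lTensor M V.subtype) ⊓ range (lTensor M W.subtype) =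
      range (lTensor M (V ⊓ W).subtype) := by
  have hcomm (U : Submodule k N) : range (lTensor M U.subtype) =
      (range (rTensor M U.subtype)).map (TensorProduct.comm k N M).toLinearMap := by
    rw [← comm_comp_rTensor_comp_comm_eq, range_comp, LinearEquiv.range_comp]
  rw [hcomm, hcomm, hcomm, ← range_rTensor_subtype_inf,
    Submodule.map_inf _ (TensorProduct.comm k N M).injective]

lemma range_mapIncl_eq_inf (V : Submodule k M) (W : Submodule k N) :
    range (mapIncl V W) = range (rTensor N V.subtype) ⊓ range (lTensor M W.subtype) := by
  refine le_antisymm (le_inf ?_ ?_) ?_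
  · rw [mapIncl, ← rTensor_comp_lTensor]
    exact range_comp_le_range _ _
  · rw [mapIncl, ← lTensor_comp_rTensor]
    exact range_comp_le_range _ _
  · rintro _ ⟨⟨s, rfl⟩, ht⟩
    rw [SetLike.mem_coe, ← lTensor_mkQ, mem_ker, ← LinearMap.comp_apply, lTensor_comp_rTensor,
      ← rTensor_comp_lTensor, LinearMap.comp_apply,
      map_eq_zero_iff _ (Module.Flat.rTensor_preserves_injective_linearMap _ V.injective_subtype),
      ← mem_ker, lTensor_mkQ] at ht
    obtain ⟨s', rfl⟩ := ht
    exact ⟨s', by rw [mapIncl, ← rTensor_comp_lTensor, LinearMap.comp_apply]⟩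

lemma range_mapIncl_inf (V V' : Submodule k M) (W W' : Submodule k N) :
    range (mapIncl (V ⊓ V') (W ⊓ W')) = range (mapIncl V W) ⊓ range (mapIncl V' W') := by
  rw [range_mapIncl_eq_inf, range_mapIncl_eq_inf, range_mapIncl_eq_inf,
    ← range_rTensor_subtype_inf, ← range_lTensor_subtype_inf, inf_inf_inf_comm]

end TensorProduct

section Field

variable {k C D : Type*} [Field k] [AddCommGroup C] [Module k C] [Coalgebra k C]
  [AddCommGroup D] [Module k D] [Coalgebra k D]

lemma isSubcoalgebra_inf {V W : Submodule k C} (hV : IsSubcoalgebra k V)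
    (hW : IsSubcoalgebra k W) : IsSubcoalgebra k (V ⊓ W) := by
  rw [isSubcoalgebra_iff_le_comap, TensorProduct.range_mapIncl_inf, Submodule.comap_inf]
  exact inf_le_inf hV hW

lemma IsSubcoalgebra.comap (g : C →ₗc[k] D) (hg : Function.Injective g) {V : Submodule k D}
    (hV : IsSubcoalgebra k V) (hVg : V ≤ range (g : C →ₗ[k] D)) :
    IsSubcoalgebra k (V.comap (g : C →ₗ[k] D)) := by
  intro x hx
  have hgx := hV (g x) hx
  rw [← Submodule.map_comap_eq_self hVg, ← CoalgHomClass.map_comp_comul_apply,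
    TensorProduct.range_mapIncl_map] at hgx
  obtain ⟨t, ht, hteq⟩ := hgx
  rwa [(TensorProduct.map_injective_of_flat_flat _ _ hg hg).eq_iff.mp hteq] at ht

end Field

variable (k C : Type*) [CommRing k] [AddCommGroup C] [Module k C] [Coalgebra k C] in
abbrev Subcoalgebra : Type _ := {V : Submodule k C // IsSubcoalgebra k V}

namespace Subcoalgebra

section Lattice

variable {k C : Type*} [Field k] [AddCommGroup C] [Module k C] [Coalgebra k C]

instance : SupSet (Subcoalgebra k C) where
  sSup S := ⟨sSup (Subtype.val '' S), isSubcoalgebra_sSup (by rintro _ ⟨V, -, rfl⟩; exact V.2)⟩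

lemma coe_sSup (S : Set (Subcoalgebra k C)) : (sSup S).1 = sSup (Subtype.val '' S) := rfl

lemma isLUB_sSup (S : Set (Subcoalgebra k C)) : IsLUB S (sSup S) :=
  ⟨fun V hV => show V.1 ≤ _ from le_sSup ⟨V, hV, rfl⟩,
    fun W hW => show _ ≤ W.1 from sSup_le (by rintro _ ⟨V, hV, rfl⟩; exact hW hV)⟩

-- Binary meets are intersections, which is what makes the lattice modular; `sInf` is only the
-- largest subcoalgebra contained in the intersection.
instance : CompleteLattice (Subcoalgebra k C) where
  __ := completeLatticeOfSup (Subcoalgebra k C) isLUB_sSup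
  inf V W := ⟨V.1 ⊓ W.1, isSubcoalgebra_inf V.2 W.2⟩
  inf_le_left V _ := inf_le_left (a := V.1)
  inf_le_right V _ := inf_le_right (a := V.1)
  le_inf _ _ _ := le_inf (α := Submodule k C)

lemma coe_inf (V W : Subcoalgebra k C) : (V ⊓ W).1 = V.1 ⊓ W.1 := rfl

lemma coe_sup (V W : Subcoalgebra k C) : (V ⊔ W).1 = V.1 ⊔ W.1 := by
  show sSup _ = _
  rw [Set.image_pair, sSup_pair]

lemma coe_bot : (⊥ : Subcoalgebra k C).1 = ⊥ := by
  show sSup _ = _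
  rw [Set.image_empty, sSup_empty]

lemma coe_top : (⊤ : Subcoalgebra k C).1 = ⊤ :=
  top_unique (le_sSup ⟨⟨⊤, isSubcoalgebra_top⟩, trivial, rfl⟩)

instance : IsModularLattice (Subcoalgebra k C) where
  sup_inf_le_assoc_of_le {V} W {U} h := by
    show ((V ⊔ W) ⊓ U).1 ≤ (V ⊔ W ⊓ U).1
    rw [coe_inf, coe_sup, coe_sup, coe_inf]
    exact IsModularLattice.sup_inf_le_assoc_of_le W.1 h

instance [FiniteDimensional k C] : IsCompactlyGenerated (Subcoalgebra k C) :=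
  CompleteLattice.isCompactlyGenerated_of_wellFoundedGT

lemma isAtom_iff {V : Subcoalgebra k C} :
    IsAtom V ↔ V.1 ≠ ⊥ ∧ ∀ W ≤ V.1, IsSubcoalgebra k W → W = ⊥ ∨ W = V.1 := by
  rw [← coe_bot, Subtype.coe_ne_coe]
  refine and_congr_right fun _ => ⟨fun hV W hWV hW => ?_, fun hV W hWV => ?_⟩
  · rcases (show (⟨W, hW⟩ : Subcoalgebra k C) ≤ V from hWV).lt_or_eq with h | h
    · exact .inl (congrArg Subtype.val (hV _ h))
    · exact .inr (congrArg Subtype.val h)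
  · exact Subtype.ext ((hV W.1 hWV.le W.2).resolve_right (Subtype.coe_ne_coe.mpr hWV.ne))

end Lattice

section Map

variable {k A D : Type*} [Field k] [AddCommGroup A] [Module k A] [Coalgebra k A]
  [AddCommGroup D] [Module k D] [Coalgebra k D]

def map (g : A →ₗc[k] D) (V : Subcoalgebra k A) : Subcoalgebra k D :=
  ⟨V.1.map (g : A →ₗ[k] D), V.2.map g⟩

lemma coe_map_top (g : A →ₗc[k] D) : (map g ⊤).1 = range (g : A →ₗ[k] D) := by
  rw [← Submodule.map_top, ← coe_top]
  rfl

def orderIsoIicMapTop (g : A →ₗc[k] D) (hg : Function.Injective g) :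
    Subcoalgebra k A ≃o Set.Iic (map g ⊤) where
  toFun V := ⟨map g V, Submodule.map_mono (le_top.trans_eq coe_top.symm)⟩
  invFun W := ⟨W.1.1.comap (g : A →ₗ[k] D), W.1.2.comap g hg (W.2.trans_eq (coe_map_top g))⟩
  left_inv V := Subtype.ext (Submodule.comap_map_eq_of_injective hg V.1)
  right_inv W := Subtype.ext (Subtype.ext (Submodule.map_comap_eq_self
    (W.2.trans_eq (coe_map_top g))))
  map_rel_iff' := Submodule.map_le_map_iff_of_injective hg _ _

end Map

end Subcoalgebra

section Cosemisimple

variable {k A C D : Type*} [Field k] [AddCommGroup A] [Module k A] [Coalgebra k A]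
  [AddCommGroup C] [Module k C] [Coalgebra k C] [AddCommGroup D] [Module k D] [Coalgebra k D]

lemma isCosemisimple_iff_sSup_atoms_eq_top :
    IsCosemisimple k C ↔ sSup {V : Subcoalgebra k C | IsAtom V} = ⊤ := by
  rw [← Subtype.coe_inj, Subcoalgebra.coe_sSup, Subcoalgebra.coe_top, IsCosemisimple]
  congr!
  ext V
  refine ⟨fun ⟨hV, h⟩ => ⟨⟨V, hV⟩, Subcoalgebra.isAtom_iff.mpr h, rfl⟩, ?_⟩
  rintro ⟨W, hW, rfl⟩
  exact ⟨W.2, Subcoalgebra.isAtom_iff.mp hW⟩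

theorem isCosemisimple_iff_complementedLattice [FiniteDimensional k C] :
    IsCosemisimple k C ↔ ComplementedLattice (Subcoalgebra k C) := by
  rw [isCosemisimple_iff_sSup_atoms_eq_top]
  refine ⟨complementedLattice_of_sSup_atoms_eq_top, fun _ => ?_⟩
  have := isAtomistic_of_complementedLattice (α := Subcoalgebra k C)
  exact sSup_atoms_eq_top

theorem IsCosemisimple.of_injective [FiniteDimensional k A] [FiniteDimensional k D]
    (hD : IsCosemisimple k D) (g : A →ₗc[k] D) (hg : Function.Injective g) :
    IsCosemisimple k A := by
  rw [isCosemisimple_iff_complementedLattice] at hD ⊢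
  exact (Subcoalgebra.orderIsoIicMapTop g hg).complementedLattice_iff.mpr inferInstance

variable {H : Type*} [Ring H] [Bialgebra k H] [FiniteDimensional k A] [FiniteDimensional k H]

theorem IsCosemisimple.of_tensorProduct_left (h : IsCosemisimple k (A ⊗[k] H)) :
    IsCosemisimple k A :=
  h.of_injective ((CoalgHom.lTensor A (Bialgebra.unitBialgHom k H : k →ₗc[k] H)).comp
      ((Coalgebra.TensorProduct.rid k k A).symm : A →ₗc[k] A ⊗[k] k))
    ((TensorProduct.map_injective_of_flat_flat _ _ Function.injective_id
      (Bialgebra.algebraMap_injective H)).comp (Coalgebra.TensorProduct.rid k k A).symm.injective)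

theorem IsCosemisimple.of_tensorProduct_right (h : IsCosemisimple k (H ⊗[k] A)) :
    IsCosemisimple k A :=
  h.of_injective ((CoalgHom.rTensor A (Bialgebra.unitBialgHom k H : k →ₗc[k] H)).comp
      ((Coalgebra.TensorProduct.lid k A).symm : A →ₗc[k] k ⊗[k] A))
    ((TensorProduct.map_injective_of_flat_flat _ _ (Bialgebra.algebraMap_injective H)
      Function.injective_id).comp (Coalgebra.TensorProduct.lid k A).symm.injective)

end Cosemisimple

theorem cosemisimple_of_double_cross_product_general (k A H D : Type*) [Field k]
    [Ring A] [HopfAlgebra k A] [Ring H] [HopfAlgebra k H] [Ring D] [HopfAlgebra k D]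
    [FiniteDimensional k A] [FiniteDimensional k H] [FiniteDimensional k D]
    (f : (A ⊗[k] H) ≃ₗ[k] D)
    (hcounit : ∀ x : A ⊗[k] H,
      Coalgebra.counit (R := k) (f x) = Coalgebra.counit (R := k) x)
    (hcomul : ∀ x : A ⊗[k] H,
      Coalgebra.comul (R := k) (f x) =
        TensorProduct.map f.toLinearMap f.toLinearMap (Coalgebra.comul (R := k) x))
    (hcoss : IsCosemisimple k D) :
    IsCosemisimple k A ∧ IsCosemisimple k H := by
  let e : A ⊗[k] H ≃ₗc[k] D :=
    { f with
      counit_comp := LinearMap.ext hcounit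
      map_comp_comul := LinearMap.ext fun x => (hcomul x).symm }
  have hAH : IsCosemisimple k (A ⊗[k] H) :=
    hcoss.of_injective (e : A ⊗[k] H →ₗc[k] D) e.injective
  exact ⟨hAH.of_tensorProduct_left, hAH.of_tensorProduct_right⟩

/-- If `D = A ⋈ H` is a double cross product of finite-dimensional Hopf algebras (its
underlying coalgebra is the tensor product coalgebra `A ⊗ H`, and the algebra structure
restricts to `A` and `H` as usual) and `D` is cosemisimple, then `A` and `H` are
cosemisimple. -/
theorem cosemisimple_of_double_cross_product (k A H D : Type*) [Field k]
    [Ring A] [HopfAlgebra k A] [Ring H] [HopfAlgebra k H] [Ring D] [HopfAlgebra k D]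
    [FiniteDimensional k A] [FiniteDimensional k H] [FiniteDimensional k D]
    (f : (A ⊗[k] H) ≃ₗ[k] D)
    (hone : f (1 ⊗ₜ 1) = 1)
    (hmulA : ∀ (a a' : A) (h : H), f (a ⊗ₜ 1) * f (a' ⊗ₜ h) = f ((a * a') ⊗ₜ h))
    (hmulH : ∀ (a : A) (h h' : H), f (a ⊗ₜ h) * f (1 ⊗ₜ h') = f (a ⊗ₜ (h * h')))
    (hcounit : ∀ x : A ⊗[k] H,
      Coalgebra.counit (R := k) (f x) = Coalgebra.counit (R := k) x)
    (hcomul : ∀ x : A ⊗[k] H,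
      Coalgebra.comul (R := k) (f x) =
        TensorProduct.map f.toLinearMap f.toLinearMap (Coalgebra.comul (R := k) x))
    (hcoss : IsCosemisimple k D) :
    IsCosemisimple k A ∧ IsCosemisimple k H :=
  cosemisimple_of_double_cross_product_general k A H D f hcounit hcomul hcoss
end

section
/- Let Γ be a finite abelian group, θ ≥ 1, g_i ∈ Γ, χ_i ∈ Γ-hat with χ_i(g_j)χ_j(g_i) = 1 for i ≠ j, and let N_i > 1 be the order of χ_i(g_i). The quantum linear space H generated by x_1, ..., x_θ with relations x_i^{N_i} = 0 and x_i x_j = χ_j(g_i) x_j x_i (i ≠ j) has dimension N_1 N_2 ... N_θ, with basis the monomials x_1^{a_1}...x_θ^{a_θ}, 0 ≤ a_i < N_i. -/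
open TensorProduct

/-- The defining relations of a quantum linear space: `xᵢ^{Nᵢ} = 0` and
`xᵢ xⱼ = qᵢⱼ xⱼ xᵢ` for `i ≠ j`. -/
def qlsRel (k : Type*) [CommRing k] (θ : ℕ) (q : Fin θ → Fin θ → k) (N : Fin θ → ℕ) :
    FreeAlgebra k (Fin θ) → FreeAlgebra k (Fin θ) → Prop := fun a b =>
  (∃ i, a = FreeAlgebra.ι k i ^ N i ∧ b = 0) ∨
  (∃ i j, i ≠ j ∧ a = FreeAlgebra.ι k i * FreeAlgebra.ι k j ∧
    b = q i j • (FreeAlgebra.ι k j * FreeAlgebra.ι k i))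

/-!
Write `xᵢ` for the generators. Since `xᵢ` skew-commutes with every `xⱼ`, left multiplication by
`xᵢ` sends an ordered monomial `x₁^{a₁} ⋯ x_θ^{a_θ}` to a scalar multiple of the monomial with
`aᵢ` raised by one, so the monomials with `aᵢ < Nᵢ` span. For independence, let `xᵢ` act on
the free module with basis `e_a`, `a ∈ ℕ^θ`, by `xᵢ e_a = (∏_{j<i} q_{ij}^{a_j}) e_{a+δᵢ}` when
`aᵢ + 1 < Nᵢ` and by `0` otherwise. These operators satisfy the defining relations (using
`q_{ij} q_{ji} = 1`), and the monomial with exponent `a` sends `e_0` to `e_a`.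
-/

section Monomial

variable {ι A : Type*} [Monoid A]

def orderedMonomial (x : ι → A) (l : List ι) (a : ι → ℕ) : A :=
  (l.map fun i => x i ^ a i).prod

lemma orderedMonomial_nil (x : ι → A) (a : ι → ℕ) : orderedMonomial x [] a = 1 := rfl

lemma orderedMonomial_cons (x : ι → A) (i : ι) (l : List ι) (a : ι → ℕ) :
    orderedMonomial x (i :: l) a = x i ^ a i * orderedMonomial x l a := rfl

lemma orderedMonomial_congr {x : ι → A} {l : List ι} {a b : ι → ℕ} (h : ∀ j ∈ l, a j = b j) :
    orderedMonomial x l a = orderedMonomial x l b := by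
  unfold orderedMonomial
  rw [List.map_congr_left fun j hj => by rw [h j hj]]

lemma map_orderedMonomial {B F : Type*} [Monoid B] [FunLike F A B] [MonoidHomClass F A B]
    (φ : F) (x : ι → A) (l : List ι) (a : ι → ℕ) :
    φ (orderedMonomial x l a) = orderedMonomial (fun i => φ (x i)) l a := by
  simp [orderedMonomial, map_list_prod, Function.comp_def]

lemma orderedMonomial_eq_zero {A : Type*} [MonoidWithZero A] {x : ι → A} {l : List ι}
    {a : ι → ℕ} {i : ι} (hi : i ∈ l) (h : x i ^ a i = 0) : orderedMonomial x l a = 0 :=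
  List.prod_eq_zero (List.mem_map.2 ⟨i, hi, h⟩)

end Monomial

section SkewCommuting

variable {k A : Type*} [CommSemiring k] [Semiring A] [Algebra k A]

lemma mul_pow_of_mul_eq_smul_mul {x y : A} {c : k} (h : x * y = c • (y * x)) (n : ℕ) :
    x * y ^ n = c ^ n • (y ^ n * x) := by
  induction n with
  | zero => simp
  | succ n ih =>
    rw [pow_succ, ← mul_assoc, ih, smul_mul_assoc, mul_assoc, h, mul_smul_comm, smul_smul,
      ← mul_assoc, ← pow_succ, ← pow_succ]

variable {ι : Type*} [LinearOrder ι]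

lemma exists_mul_orderedMonomial_eq_smul {x : ι → A} {i : ι}
    (hx : ∀ j < i, ∃ c : k, x i * x j = c • (x j * x i)) {l : List ι}
    (hl : l.Pairwise (· < ·)) (hi : i ∈ l) (a : ι → ℕ) :
    ∃ c : k, x i * orderedMonomial x l a
      = c • orderedMonomial x l (Function.update a i (a i + 1)) := by
  induction l with
  | nil => simp at hi
  | cons j l ih =>
    obtain ⟨hjl, hl⟩ := List.pairwise_cons.1 hl
    rcases List.mem_cons.1 hi with rfl | hil
    · refine ⟨1, ?_⟩
      have : ∀ j ∈ l, a j = Function.update a i (a i + 1) j := fun j hj =>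
        (Function.update_of_ne (hjl j hj).ne' _ _).symm
      rw [orderedMonomial_cons, orderedMonomial_cons, one_smul, ← mul_assoc, ← pow_succ',
        Function.update_self, orderedMonomial_congr this]
    · have hji : j < i := hjl i hil
      obtain ⟨c, hc⟩ := hx j hji
      obtain ⟨d, hd⟩ := ih hl hil
      refine ⟨c ^ a j * d, ?_⟩
      rw [orderedMonomial_cons, orderedMonomial_cons, ← mul_assoc,
        mul_pow_of_mul_eq_smul_mul hc, smul_mul_assoc, mul_assoc, hd, mul_smul_comm, smul_smul,
        Function.update_of_ne hji.ne]

end SkewCommuting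

lemma Submodule.eq_top_of_one_mem_of_mul_mem {k A ι : Type*} [CommSemiring k] [Semiring A]
    [Algebra k A] {x : ι → A} (hx : Algebra.adjoin k (Set.range x) = ⊤) {S : Submodule k A}
    (h1 : 1 ∈ S) (hmul : ∀ i, ∀ s ∈ S, x i * s ∈ S) : S = ⊤ := by
  have key : ∀ y ∈ Algebra.adjoin k (Set.range x), ∀ s ∈ S, y * s ∈ S := by
    intro y hy
    induction hy using Algebra.adjoin_induction with
    | mem y hy => obtain ⟨i, rfl⟩ := hy; exact hmul i
    | algebraMap r => intro s hs; simpa [Algebra.algebraMap_eq_smul_one] using S.smul_mem r hs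
    | add y z _ _ hy hz => intro s hs; rw [add_mul]; exact S.add_mem (hy s hs) (hz s hs)
    | mul y z _ _ hy hz => intro s hs; rw [mul_assoc]; exact hy _ (hz s hs)
  refine eq_top_iff.2 fun y _ => ?_
  simpa using key y (hx ▸ Algebra.mem_top) 1 h1

abbrev QuantumLinearSpace (k : Type*) [CommRing k] {θ : ℕ} (q : Fin θ → Fin θ → k)
    (N : Fin θ → ℕ) : Type _ :=
  RingQuot (qlsRel k θ q N)

namespace QuantumLinearSpace

variable {k : Type*} [CommRing k] {θ : ℕ} (q : Fin θ → Fin θ → k) (N : Fin θ → ℕ)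

open Function
open Finsupp (single linearCombination linearCombination_single lsingle_apply)

def X (i : Fin θ) : QuantumLinearSpace k q N :=
  RingQuot.mkAlgHom k (qlsRel k θ q N) (FreeAlgebra.ι k i)

lemma X_pow_eq_zero (i : Fin θ) : X q N i ^ N i = 0 := by
  simpa [X] using RingQuot.mkAlgHom_rel k (s := qlsRel k θ q N) (Or.inl ⟨i, rfl, rfl⟩ :
    qlsRel k θ q N (FreeAlgebra.ι k i ^ N i) 0)

lemma X_mul_X {i j : Fin θ} (hij : i ≠ j) : X q N i * X q N j = q i j • (X q N j * X q N i) := by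
  simpa [X] using RingQuot.mkAlgHom_rel k (s := qlsRel k θ q N) (Or.inr ⟨i, j, hij, rfl, rfl⟩ :
    qlsRel k θ q N (FreeAlgebra.ι k i * FreeAlgebra.ι k j)
      (q i j • (FreeAlgebra.ι k j * FreeAlgebra.ι k i)))

lemma adjoin_range_X : Algebra.adjoin k (Set.range (X q N)) = ⊤ := by
  have : Set.range (X q N) =
      RingQuot.mkAlgHom k (qlsRel k θ q N) '' Set.range (FreeAlgebra.ι k) := by
    rw [← Set.range_comp]
    rfl
  rw [this, ← AlgHom.map_adjoin, FreeAlgebra.adjoin_range_ι, Algebra.map_top,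
    AlgHom.range_eq_top]
  exact RingQuot.mkAlgHom_surjective k _

def monomial (a : Fin θ → ℕ) : QuantumLinearSpace k q N :=
  orderedMonomial (X q N) (List.finRange θ) a

lemma monomial_eq_mkAlgHom (a : Fin θ → ℕ) :
    monomial q N a =
      RingQuot.mkAlgHom k (qlsRel k θ q N)
        ((List.ofFn fun i => FreeAlgebra.ι k i ^ a i).prod) := by
  rw [List.ofFn_eq_map, ← orderedMonomial, map_orderedMonomial]
  rfl

lemma monomial_eq_zero {a : Fin θ → ℕ} {i : Fin θ} (h : N i ≤ a i) : monomial q N a = 0 :=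
  orderedMonomial_eq_zero (List.mem_finRange i) (pow_eq_zero_of_le h (X_pow_eq_zero q N i))

def coeff (i : Fin θ) (a : Fin θ → ℕ) : k := ∏ j ∈ Finset.Iio i, q i j ^ a j

lemma coeff_update_succ (i j : Fin θ) (a : Fin θ → ℕ) :
    coeff q i (update a j (a j + 1)) = (if j < i then q i j else 1) * coeff q i a := by
  have : ∀ l, q i l ^ update a j (a j + 1) l = (if l = j then q i l else 1) * q i l ^ a l := by
    intro l
    rcases eq_or_ne l j with rfl | hl
    · simp [pow_succ']
    · simp [hl]
  simp only [coeff, this, Finset.prod_mul_distrib, Finset.prod_ite_eq', Finset.mem_Iio]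

lemma coeff_eq_one {i : Fin θ} {a : Fin θ → ℕ} (ha : ∀ j < i, a j = 0) : coeff q i a = 1 :=
  Finset.prod_eq_one fun j hj => by rw [ha j (Finset.mem_Iio.1 hj), pow_zero]

noncomputable def generatorOp (i : Fin θ) : Module.End k ((Fin θ → ℕ) →₀ k) :=
  linearCombination k fun a =>
    if a i + 1 < N i then coeff q i a • single (update a i (a i + 1)) 1 else 0

lemma generatorOp_single (i : Fin θ) (a : Fin θ → ℕ) :
    generatorOp q N i (single a 1) =
      if a i + 1 < N i then coeff q i a • single (update a i (a i + 1)) 1 else 0 := by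
  rw [generatorOp, linearCombination_single, one_smul]

lemma generatorOp_pow_succ_single_eq_zero (i : Fin θ) (n : ℕ) (a : Fin θ → ℕ)
    (h : N i ≤ a i + n + 1) : (generatorOp q N i ^ (n + 1)) (single a 1) = 0 := by
  induction n generalizing a with
  | zero => simp [generatorOp_single, show ¬ a i + 1 < N i by omega]
  | succ n ih =>
    rw [pow_succ, Module.End.mul_apply, generatorOp_single]
    split_ifs
    · rw [map_smul, ih _ (by rw [update_self]; omega), smul_zero]
    · exact map_zero _

lemma generatorOp_pow_eq_zero {i : Fin θ} (hN : 0 < N i) : generatorOp q N i ^ N i = 0 := by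
  obtain ⟨n, hn⟩ := Nat.exists_eq_add_of_lt hN
  ext a : 2
  simpa [hn] using generatorOp_pow_succ_single_eq_zero q N i n a (by omega)

lemma generatorOp_generatorOp_single {i j : Fin θ} (hij : i ≠ j) (a : Fin θ → ℕ) :
    generatorOp q N i (generatorOp q N j (single a 1)) =
      if a i + 1 < N i ∧ a j + 1 < N j then
        (coeff q j a * coeff q i (update a j (a j + 1))) •
          single (update (update a j (a j + 1)) i (a i + 1)) 1
      else 0 := by
  rw [generatorOp_single]
  split_ifs with hj h h
  · rw [map_smul, generatorOp_single, update_of_ne hij, if_pos h.1, smul_smul]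
  · rw [map_smul, generatorOp_single, update_of_ne hij, if_neg (by tauto), smul_zero]
  · exact absurd h.2 hj
  · exact map_zero _

lemma generatorOp_mul_generatorOp {i j : Fin θ} (hq : q i j * q j i = 1) (hij : i ≠ j) :
    generatorOp q N i * generatorOp q N j = q i j • (generatorOp q N j * generatorOp q N i) := by
  ext a : 2
  simp only [LinearMap.coe_comp, Function.comp_apply, lsingle_apply, Module.End.mul_apply,
    LinearMap.smul_apply, generatorOp_generatorOp_single q N hij,
    generatorOp_generatorOp_single q N hij.symm, update_comm hij, and_comm (a := a i + 1 < N i)]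
  split_ifs
  · rw [smul_smul, coeff_update_succ, coeff_update_succ]
    congr 1
    rcases hij.lt_or_gt with h | h
    · simp only [h, h.not_gt, if_true, if_false]
      linear_combination -(coeff q j a * coeff q i a) * hq
    · simp only [h, h.not_gt, if_true, if_false]
      ring
  · rw [smul_zero]

lemma generatorOp_pow_single {i : Fin θ} {b : Fin θ → ℕ} (hb : ∀ j ≤ i, b j = 0) {n : ℕ}
    (hn : n < N i) : (generatorOp q N i ^ n) (single b 1) = single (update b i n) 1 := by
  induction n with
  | zero => rw [pow_zero, Module.End.one_apply, update_eq_self_iff.2 (hb i le_rfl).symm]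
  | succ n ih =>
    have hc : coeff q i (update b i n) = 1 :=
      coeff_eq_one q fun j hj => by rw [update_of_ne hj.ne, hb j hj.le]
    rw [pow_succ', Module.End.mul_apply, ih (by omega), generatorOp_single, update_self,
      if_pos hn, hc, one_smul, update_idem]

lemma orderedMonomial_generatorOp_single {l : List (Fin θ)} (hl : l.Pairwise (· < ·))
    {a : Fin θ → ℕ} (ha : ∀ i ∈ l, a i < N i) {b : Fin θ → ℕ} (hb : ∀ i ∈ l, ∀ j ≤ i, b j = 0) :
    orderedMonomial (generatorOp q N) l a (single b 1) =
      single (fun j => if j ∈ l then a j else b j) 1 := by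
  induction l with
  | nil => simp [orderedMonomial_nil]
  | cons i l ih =>
    obtain ⟨hil, hl⟩ := List.pairwise_cons.1 hl
    have hb' : ∀ j ≤ i, (if j ∈ l then a j else b j) = 0 := fun j hj => by
      rw [if_neg fun hjl => (hj.trans_lt (hil j hjl)).false, hb i List.mem_cons_self j hj]
    rw [orderedMonomial_cons, Module.End.mul_apply,
      ih hl (fun i hi => ha i (List.mem_cons_of_mem _ hi))
        (fun i hi => hb i (List.mem_cons_of_mem _ hi)),
      generatorOp_pow_single q N hb' (ha i List.mem_cons_self)]
    congr 1
    funext j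
    rcases eq_or_ne j i with rfl | hji
    · simp
    · simp [hji]

section Representation

variable {q N}

noncomputable def rep (hq : ∀ i j, i ≠ j → q i j * q j i = 1) (hN : ∀ i, 0 < N i) :
    QuantumLinearSpace k q N →ₐ[k] Module.End k ((Fin θ → ℕ) →₀ k) :=
  RingQuot.liftAlgHom k ⟨FreeAlgebra.lift k (generatorOp q N), by
    rintro _ _ (⟨i, rfl, rfl⟩ | ⟨i, j, hij, rfl, rfl⟩)
    · simp [generatorOp_pow_eq_zero q N (hN i)]
    · simp [generatorOp_mul_generatorOp q N (hq i j hij) hij]⟩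

lemma rep_X (hq : ∀ i j, i ≠ j → q i j * q j i = 1) (hN : ∀ i, 0 < N i) (i : Fin θ) :
    rep hq hN (X q N i) = generatorOp q N i := by
  simp [rep, X]

lemma rep_monomial_apply_single_zero (hq : ∀ i j, i ≠ j → q i j * q j i = 1)
    (hN : ∀ i, 0 < N i) {a : Fin θ → ℕ} (ha : ∀ i, a i < N i) :
    rep hq hN (monomial q N a) (single 0 1) = single a 1 := by
  simp only [monomial, map_orderedMonomial, rep_X]
  refine (orderedMonomial_generatorOp_single q N (List.pairwise_lt_finRange θ) (fun i _ => ha i)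
    (b := 0) fun _ _ _ _ => rfl).trans ?_
  simp

lemma linearIndependent_monomial (hq : ∀ i j, i ≠ j → q i j * q j i = 1) (hN : ∀ i, 0 < N i) :
    LinearIndependent k fun a : (∀ i, Fin (N i)) => monomial q N fun i => a i := by
  refine LinearIndependent.of_comp
    ((LinearMap.applyₗ (single 0 1)).comp (rep hq hN).toLinearMap) ?_
  have hinj : Injective fun (a : ∀ i, Fin (N i)) (i : Fin θ) => (a i : ℕ) :=
    fun a b h => funext fun i => Fin.ext (congrFun h i)
  convert (Finsupp.linearIndependent_single_one k (Fin θ → ℕ)).comp _ hinj using 1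
  funext a
  exact rep_monomial_apply_single_zero hq hN fun i => (a i).isLt

end Representation

lemma monomial_mem_span (a : Fin θ → ℕ) :
    monomial q N a ∈ Submodule.span k
      (Set.range fun a : (∀ i, Fin (N i)) => monomial q N fun i => a i) := by
  by_cases ha : ∀ i, a i < N i
  · exact Submodule.subset_span ⟨fun i => ⟨a i, ha i⟩, rfl⟩
  · simp only [not_forall, not_lt] at ha
    obtain ⟨i, hi⟩ := ha
    rw [monomial_eq_zero q N hi]
    exact Submodule.zero_mem _

lemma span_monomial_eq_top :
    Submodule.span k (Set.range fun a : (∀ i, Fin (N i)) => monomial q N fun i => a i) = ⊤ := by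
  refine Submodule.eq_top_of_one_mem_of_mul_mem (adjoin_range_X q N)
    (by simpa [monomial, orderedMonomial] using monomial_mem_span q N 0) fun i s hs => ?_
  induction hs using Submodule.span_induction with
  | mem y hy =>
    obtain ⟨a, rfl⟩ := hy
    obtain ⟨c, hc⟩ := exists_mul_orderedMonomial_eq_smul
      (fun j hj => ⟨q i j, X_mul_X q N hj.ne'⟩) (List.pairwise_lt_finRange θ)
      (List.mem_finRange i) fun i => (a i : ℕ)
    exact hc ▸ Submodule.smul_mem _ c (monomial_mem_span q N _)
  | zero => simp
  | add y z _ _ hy hz => rw [mul_add]; exact Submodule.add_mem _ hy hz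
  | smul c y _ hy => rw [mul_smul_comm]; exact Submodule.smul_mem _ c hy

noncomputable def monomialBasis (hq : ∀ i j, i ≠ j → q i j * q j i = 1) (hN : ∀ i, 0 < N i) :
    Module.Basis (∀ i, Fin (N i)) k (QuantumLinearSpace k q N) :=
  .mk (linearIndependent_monomial hq hN) (span_monomial_eq_top q N).ge

lemma monomialBasis_apply (hq : ∀ i j, i ≠ j → q i j * q j i = 1) (hN : ∀ i, 0 < N i)
    (a : ∀ i, Fin (N i)) :
    monomialBasis q N hq hN a = RingQuot.mkAlgHom k (qlsRel k θ q N)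
      ((List.ofFn fun i => FreeAlgebra.ι k i ^ (a i : ℕ)).prod) := by
  rw [monomialBasis, Module.Basis.mk_apply, monomial_eq_mkAlgHom]

lemma finrank_eq_prod [Nontrivial k] (hq : ∀ i j, i ≠ j → q i j * q j i = 1)
    (hN : ∀ i, 0 < N i) : Module.finrank k (QuantumLinearSpace k q N) = ∏ i, N i := by
  simp [Module.finrank_eq_card_basis (monomialBasis q N hq hN)]

end QuantumLinearSpace

theorem quantum_linear_space_dim_general (k : Type*) [Field k]
    (Γ : Type*) [CommGroup Γ] (θ : ℕ)
    (g : Fin θ → Γ) (χ : Fin θ → (Γ →* kˣ))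
    (hcompat : ∀ i j, i ≠ j → ((χ i (g j) : k)) * ((χ j (g i) : k)) = 1)
    (N : Fin θ → ℕ) (hN1 : ∀ i, 1 < N i) :
    Module.finrank k
        (RingQuot (qlsRel k θ (fun i j => ((χ j (g i) : k))) N)) = ∏ i, N i ∧
    ∃ B : Module.Basis (∀ i, Fin (N i)) k
        (RingQuot (qlsRel k θ (fun i j => ((χ j (g i) : k))) N)),
      ∀ a : ∀ i, Fin (N i),
        B a = RingQuot.mkAlgHom k (qlsRel k θ (fun i j => ((χ j (g i) : k))) N)
          ((List.ofFn fun i => FreeAlgebra.ι k i ^ ((a i : ℕ))).prod) := by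
  have hq : ∀ i j, i ≠ j → (χ j (g i) : k) * (χ i (g j) : k) = 1 :=
    fun i j hij => by rw [mul_comm]; exact hcompat i j hij
  have hN : ∀ i, 0 < N i := fun i => zero_lt_one.trans (hN1 i)
  exact ⟨QuantumLinearSpace.finrank_eq_prod _ N hq hN,
    QuantumLinearSpace.monomialBasis _ N hq hN, QuantumLinearSpace.monomialBasis_apply _ N hq hN⟩

/-- (Andruskiewitsch–Schneider) Let `Γ` be a finite abelian group, `gᵢ ∈ Γ`,
`χᵢ ∈ Γ-hat` with `χᵢ(gⱼ)χⱼ(gᵢ) = 1` for `i ≠ j`, and `Nᵢ > 1` the order of `χᵢ(gᵢ)`.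
The quantum linear space `H` generated by `x₁, …, x_θ` with relations `xᵢ^{Nᵢ} = 0` and
`xᵢxⱼ = χⱼ(gᵢ) xⱼxᵢ` (`i ≠ j`) has dimension `N₁N₂⋯N_θ`, with basis the monomials
`x₁^{a₁}⋯x_θ^{a_θ}`, `0 ≤ aᵢ < Nᵢ`. -/
theorem quantum_linear_space_dim (k : Type*) [Field k] [IsAlgClosed k] [CharZero k]
    (Γ : Type*) [CommGroup Γ] [Fintype Γ] (θ : ℕ)
    (g : Fin θ → Γ) (χ : Fin θ → (Γ →* kˣ))
    (hcompat : ∀ i j, i ≠ j → ((χ i (g j) : k)) * ((χ j (g i) : k)) = 1)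
    (N : Fin θ → ℕ) (hN : ∀ i, N i = orderOf ((χ i (g i) : kˣ))) (hN1 : ∀ i, 1 < N i) :
    Module.finrank k
        (RingQuot (qlsRel k θ (fun i j => ((χ j (g i) : k))) N)) = ∏ i, N i ∧
    ∃ B : Module.Basis (∀ i, Fin (N i)) k
        (RingQuot (qlsRel k θ (fun i j => ((χ j (g i) : k))) N)),
      ∀ a : ∀ i, Fin (N i),
        B a = RingQuot.mkAlgHom k (qlsRel k θ (fun i j => ((χ j (g i) : k))) N)
          ((List.ofFn fun i => FreeAlgebra.ι k i ^ ((a i : ℕ))).prod) :=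
  quantum_linear_space_dim_general k Γ θ g χ hcompat N hN1
end
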